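/- arXiv:1509.02117 — 2 statements merged into one kernel-verified Lean document; each statement's English description precedes it below -/
import Mathlib

section
/- Let a, b ≥ 1 and let u, v be bit sequences such that u 1^a 0^b v is an (n,r)-sequence. Then T(F(u 1^a 0^b v)) − T(F(u 1^{a−1} 0 1 0^{b−1} v)) = f(u) · g(v) · (x + y − xy), where f(u) = T(F(u); 1, y) and g(v) = T(F(v); x, 1). -/
open MvPolynomial
open scoped Classical

/-- The dominance order on bit sequences: `Dominates s t` means `s ⊵ t`, i.e. every
prefix of `s` has at least as many `1`s (`true`s) as the corresponding prefix of `t`. -/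
def Dominates (s t : List Bool) : Prop :=
  ∀ j : ℕ, (t.take j).count true ≤ (s.take j).count true

/-- The indicator bit sequence of a subset `B` of `{1,…,n}` (modelled as `Fin n`). -/
def indList {n : ℕ} (B : Finset (Fin n)) : List Bool :=
  List.ofFn fun i : Fin n => decide (i ∈ B)

/-- The finset of `(n,r)`-sequences: bit sequences of length `n` with exactly `r` ones. -/
def seqs (n r : ℕ) : Finset (List Bool) :=
  ((Finset.univ : Finset (Fin n → Bool)).image List.ofFn).filter fun l => l.count true = r

/-- The Tutte polynomial determined by a rank function `rk` on subsets of an `n`-element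
ground set, where `r` is the rank of the whole ground set.  The variable `X 0` plays the
role of `x` and `X 1` plays the role of `y`. -/
noncomputable def tutte (K : Type*) [Field K] {n : ℕ} (r : ℕ) (rk : Finset (Fin n) → ℕ) :
    MvPolynomial (Fin 2) K :=
  ∑ A : Finset (Fin n), (X 0 - 1) ^ (r - rk A) * (X 1 - 1) ^ (A.card - rk A)

/-- `B` is a basis of the freedom matroid `F(s)`: it has `wt s` elements and its
indicator sequence is dominated by `s`. -/
def IsFreedomBasis (s : List Bool) (B : Finset (Fin s.length)) : Prop :=
  B.card = s.count true ∧ Dominates s (indList B)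

/-- The rank function of the freedom matroid `F(s)`: the rank of a set is the largest
size of its intersection with a basis. -/
noncomputable def freedomRk (s : List Bool) (A : Finset (Fin s.length)) : ℕ :=
  (Finset.univ.filter fun B => IsFreedomBasis s B).sup fun B => (A ∩ B).card

/-- The Tutte polynomial of the freedom matroid `F(s)`. -/
noncomputable def freedomTutte (K : Type*) [Field K] (s : List Bool) :
    MvPolynomial (Fin 2) K :=
  tutte K (s.count true) (freedomRk s)

/-- The rank of a set in a matroid: the largest cardinality of an independent subset. -/
noncomputable def mrank {n : ℕ} (M : Matroid (Fin n)) (A : Set (Fin n)) : ℕ :=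
  (Finset.univ.filter fun I : Finset (Fin n) =>
    M.Indep ↑I ∧ (↑I : Set (Fin n)) ⊆ A).sup Finset.card

/-- The set `{π(1),…,π(m)}` of the first `m` values of a permutation. -/
def prefFinset {n : ℕ} (π : Equiv.Perm (Fin n)) (m : ℕ) : Finset (Fin n) :=
  (Finset.univ.filter fun i : Fin n => (i : ℕ) < m).image π

/-- The rank sequence of a permutation `π` with respect to a rank function `rk`:
its `j`-th entry is `1` (`true`) exactly when `rk {π(1),…,π(j)} = rk {π(1),…,π(j-1)} + 1`. -/
def rankSeq {n : ℕ} (rk : Finset (Fin n) → ℕ) (π : Equiv.Perm (Fin n)) : List Bool :=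
  List.ofFn fun j : Fin n =>
    decide (rk (prefFinset π ((j : ℕ) + 1)) = rk (prefFinset π (j : ℕ)) + 1)

/-- `gCoeff rk l` is the number of permutations of the ground set whose rank sequence
is the bit sequence `l`; these are the coefficients of the `G`-invariant. -/
noncomputable def gCoeff {n : ℕ} (rk : Finset (Fin n) → ℕ) (l : List Bool) : ℕ :=
  (Finset.univ.filter fun π : Equiv.Perm (Fin n) => rankSeq rk π = l).card

/-- The `G`-invariant, as an element of the free `K`-module on all bit sequences. -/
noncomputable def Ginv (K : Type*) [Field K] {n : ℕ} (rk : Finset (Fin n) → ℕ) :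
    List Bool →₀ K :=
  ∑ π : Equiv.Perm (Fin n), Finsupp.single (rankSeq rk π) 1

/-- The value of the specialization `Sp` on the symbol `[l]`. -/
noncomputable def spPoly (K : Type*) [Field K] (l : List Bool) : MvPolynomial (Fin 2) K :=
  ∑ m ∈ Finset.range (l.length + 1),
    ((m.factorial * (l.length - m).factorial : ℕ) : K)⁻¹ •
      ((X 0 - 1) ^ (l.count true - (l.take m).count true) *
        (X 1 - 1) ^ (m - (l.take m).count true))

/-- The specialization `Sp` as a linear map on the free module on bit-sequence symbols. -/
noncomputable def SpMap (K : Type*) [Field K] :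
    (List Bool →₀ K) →ₗ[K] MvPolynomial (Fin 2) K :=
  Finsupp.linearCombination K (spPoly K)

/-- `G(n,r)`: the span of the `(n,r)`-sequence symbols, a subspace of dimension
`binomial(n,r)` of the free module on all bit sequences. -/
noncomputable def Gspace (K : Type*) [Field K] (n r : ℕ) : Submodule K (List Bool →₀ K) :=
  Submodule.span K ((fun l => Finsupp.single l (1 : K)) '' ↑(seqs n r))

/-- `T(n,r)`: the span of the Tutte polynomials of all `(n,r)`-matroids. -/
noncomputable def Tspace (K : Type*) [Field K] (n r : ℕ) :
    Submodule K (MvPolynomial (Fin 2) K) :=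
  Submodule.span K {p | ∃ M : Matroid (Fin n), M.E = Set.univ ∧ mrank M Set.univ = r ∧
    p = tutte K r fun A : Finset (Fin n) => mrank M ↑A}

/-- The bit sequence `0^a 1^b 0^c 1^d` associated to a quadruple `(a,b,c,d)`;
such sequences are the join-irreducible ones. -/
def joinList (q : ℕ × ℕ × ℕ × ℕ) : List Bool :=
  List.replicate q.1 false ++ List.replicate q.2.1 true ++
    List.replicate q.2.2.1 false ++ List.replicate q.2.2.2 true

/-- The bit sequence `1^a 0^b 1^c 0^d` associated to a quadruple `(a,b,c,d)`;
such sequences are the meet-irreducible ones. -/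
def meetList (q : ℕ × ℕ × ℕ × ℕ) : List Bool :=
  List.replicate q.1 true ++ List.replicate q.2.1 false ++
    List.replicate q.2.2.1 true ++ List.replicate q.2.2.2 false

/-- Quadruples `(a,b,c,d)` with `a+b+c+d = n` and `b+d = r`, indexing the
join-irreducible `(n,r)`-sequences `0^a 1^b 0^c 1^d`. -/
def joinIdx (n r : ℕ) : Type :=
  {q : ℕ × ℕ × ℕ × ℕ // q.1 + q.2.1 + q.2.2.1 + q.2.2.2 = n ∧ q.2.1 + q.2.2.2 = r}

/-- Quadruples `(a,b,c,d)` with `a+b+c+d = n` and `a+c = r`, indexing the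
meet-irreducible `(n,r)`-sequences `1^a 0^b 1^c 0^d`. -/
def meetIdx (n r : ℕ) : Type :=
  {q : ℕ × ℕ × ℕ × ℕ // q.1 + q.2.1 + q.2.2.1 + q.2.2.2 = n ∧ q.1 + q.2.2.1 = r}

/-- `f(u) = T(F(u); 1, y)`. -/
noncomputable def fEval (K : Type*) [Field K] (u : List Bool) : MvPolynomial (Fin 2) K :=
  MvPolynomial.aeval (fun i : Fin 2 => if i = 0 then 1 else X 1) (freedomTutte K u)

/-- `g(u) = T(F(u); x, 1)`. -/
noncomputable def gEval (K : Type*) [Field K] (u : List Bool) : MvPolynomial (Fin 2) K :=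
  MvPolynomial.aeval (fun i : Fin 2 => if i = 0 then X 0 else 1) (freedomTutte K u)

/-- `τ(u) = T(F(u); 1, 1)`. -/
noncomputable def tauEval (K : Type*) [Field K] (u : List Bool) : MvPolynomial (Fin 2) K :=
  MvPolynomial.aeval (fun _ : Fin 2 => (1 : MvPolynomial (Fin 2) K)) (freedomTutte K u)

open Finset

namespace FT

variable {N : ℕ}

def pc {N : ℕ} (A : Finset (Fin N)) (j : ℕ) : ℕ := (A.filter fun i : Fin N => (i:ℕ) < j).card
def tc {N : ℕ} (A : Finset (Fin N)) (j : ℕ) : ℕ := (A.filter fun i : Fin N => j ≤ (i:ℕ)).card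
def sg (s : List Bool) (j : ℕ) : ℕ := ((s.take j).count true)

lemma pc_add_tc (A : Finset (Fin N)) (j : ℕ) : pc A j + tc A j = A.card := by
  classical
  have := Finset.card_filter_add_card_filter_not (s := A) (p := fun i : Fin N => (i:ℕ) < j)
  simpa [pc, tc, not_lt] using this

lemma pc_mono_set {A B : Finset (Fin N)} (h : A ⊆ B) (j : ℕ) : pc A j ≤ pc B j :=
  Finset.card_le_card (Finset.filter_subset_filter _ h)

lemma tc_mono_set {A B : Finset (Fin N)} (h : A ⊆ B) (j : ℕ) : tc A j ≤ tc B j :=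
  Finset.card_le_card (Finset.filter_subset_filter _ h)

lemma pc_zero (A : Finset (Fin N)) : pc A 0 = 0 := by simp [pc]

lemma tc_zero (A : Finset (Fin N)) : tc A 0 = A.card := by simp [tc]

lemma pc_big {A : Finset (Fin N)} {j : ℕ} (h : N ≤ j) : pc A j = A.card := by
  rw [pc, Finset.filter_true_of_mem fun i _ => lt_of_lt_of_le i.isLt h]

lemma tc_big {A : Finset (Fin N)} {j : ℕ} (h : N ≤ j) : tc A j = 0 := by
  rw [tc, Finset.card_eq_zero]
  exact Finset.filter_false_of_mem fun i _ => by omega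

lemma pc_mono {A : Finset (Fin N)} {j j' : ℕ} (h : j ≤ j') : pc A j ≤ pc A j' :=
  Finset.card_le_card (Finset.monotone_filter_right A (fun i _ hi => lt_of_lt_of_le hi h))

lemma tc_anti {A : Finset (Fin N)} {j j' : ℕ} (h : j ≤ j') : tc A j' ≤ tc A j :=
  Finset.card_le_card (Finset.monotone_filter_right A (fun i _ hi => le_trans h hi))

lemma inter_card_le (A B : Finset (Fin N)) (j : ℕ) : (A ∩ B).card ≤ pc B j + tc A j := by
  have hsub : A ∩ B ⊆ (B.filter fun i : Fin N => (i:ℕ) < j) ∪ (A.filter fun i : Fin N => j ≤ (i:ℕ)) := by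
    intro i hi
    rw [Finset.mem_inter] at hi
    rcases lt_or_ge (i:ℕ) j with h' | h'
    · exact Finset.mem_union_left _ (Finset.mem_filter.2 ⟨hi.2, h'⟩)
    · exact Finset.mem_union_right _ (Finset.mem_filter.2 ⟨hi.1, h'⟩)
  calc (A ∩ B).card ≤ _ := Finset.card_le_card hsub
    _ ≤ _ := Finset.card_union_le _ _

lemma pc_insert {A : Finset (Fin N)} {x : Fin N} (hx : x ∉ A) (j : ℕ) :
    pc (insert x A) j = pc A j + if (x:ℕ) < j then 1 else 0 := by
  rw [pc, Finset.filter_insert]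
  split_ifs with h
  · rw [Finset.card_insert_of_notMem (fun hc => hx (Finset.mem_of_mem_filter _ hc))]
    rfl
  · simp [pc]

lemma pc_erase {A : Finset (Fin N)} {x : Fin N} (hx : x ∈ A) (j : ℕ) :
    pc A j = pc (A.erase x) j + if (x:ℕ) < j then 1 else 0 := by
  have h1 : (A.erase x).filter (fun i : Fin N => (i:ℕ) < j) = (A.filter fun i : Fin N => (i:ℕ) < j).erase x := by
    rw [Finset.filter_erase]
  rw [pc, pc, h1]
  split_ifs with h
  · rw [Finset.card_erase_of_mem (Finset.mem_filter.2 ⟨hx, h⟩)]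
    have : x ∈ A.filter (fun i : Fin N => (i:ℕ) < j) := Finset.mem_filter.2 ⟨hx, h⟩
    have hpos : 0 < (A.filter fun i : Fin N => (i:ℕ) < j).card := Finset.card_pos.2 ⟨x, this⟩
    omega
  · rw [Finset.erase_eq_of_notMem (s := A.filter fun i : Fin N => (i:ℕ) < j) (a := x)
      (fun hc => h (Finset.mem_filter.1 hc).2), Nat.add_zero]

lemma card_filter_lt (m : ℕ) : ((Finset.univ : Finset (Fin N)).filter fun i : Fin N => (i:ℕ) < m).card = min m N := by
  rw [Finset.card_bij' (fun (i : Fin N) _ => (i : ℕ)) (fun (k : ℕ) hk => (⟨k, by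
      simp only [Finset.mem_range] at hk; omega⟩ : Fin N)) ?_ ?_ ?_ ?_ (t := Finset.range (min m N))]
  · exact (Finset.card_range _)
  · intro i hi; simp only [Finset.mem_filter] at hi; simp only [Finset.mem_range]; omega
  · intro k hk; simp only [Finset.mem_range] at hk; simp only [Finset.mem_filter, Finset.mem_univ, true_and]; omega
  · intro i _; rfl
  · intro k hk; rfl

lemma card_filter_ge (l : ℕ) : ((Finset.univ : Finset (Fin N)).filter fun i : Fin N => l ≤ (i:ℕ)).card = N - l := by
  have h1 := pc_add_tc (Finset.univ : Finset (Fin N)) l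
  have h2 := card_filter_lt (N := N) l
  rw [Finset.card_univ, Fintype.card_fin] at h1
  rw [pc] at h1; rw [tc] at *
  omega

lemma card_filter_interval {l m : ℕ} (hm : m ≤ N) :
    ((Finset.univ : Finset (Fin N)).filter fun i : Fin N => l ≤ (i:ℕ) ∧ (i:ℕ) < m).card = m - l := by
  rw [Finset.card_bij' (fun (i : Fin N) _ => (i : ℕ)) (fun (k : ℕ) hk => (⟨k, by
      simp only [Finset.mem_Ico] at hk; omega⟩ : Fin N)) ?_ ?_ ?_ ?_ (t := Finset.Ico l m)]
  · rw [Nat.card_Ico]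
  · intro i hi; simp only [Finset.mem_filter] at hi; simp only [Finset.mem_Ico]; omega
  · intro k hk; simp only [Finset.mem_Ico] at hk; simp only [Finset.mem_filter, Finset.mem_univ, true_and]; omega
  · intro i _; rfl
  · intro k hk; rfl

lemma sg_append (x y : List Bool) (j : ℕ) : sg (x ++ y) j = sg x j + sg y (j - x.length) := by
  rw [sg, List.take_append, List.count_append]; rfl

lemma sg_rep_true (k j : ℕ) : sg (List.replicate k true) j = min j k := by
  simp [sg, List.take_replicate, List.count_replicate]

lemma sg_rep_false (k j : ℕ) : sg (List.replicate k false) j = 0 := by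
  simp [sg, List.take_replicate, List.count_replicate]

lemma sg_zero (s : List Bool) : sg s 0 = 0 := by simp [sg]

lemma sg_big {s : List Bool} {j : ℕ} (h : s.length ≤ j) : sg s j = s.count true := by
  rw [sg, List.take_of_length_le h]

lemma sg_mono {s : List Bool} {j j' : ℕ} (h : j ≤ j') : sg s j ≤ sg s j' := by
  rw [sg, sg, show s.take j = (s.take j').take j by rw [List.take_take, min_eq_left h]]
  exact List.Sublist.count_le true (List.take_sublist _ _)

lemma sg_add_le (s : List Bool) (j d : ℕ) : sg s (j + d) ≤ sg s j + d := by
  rw [sg, sg, List.take_add, List.count_append]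
  have h1 := List.count_le_length (a := true) (l := (s.drop j).take d)
  have h2 := List.length_take (i := d) (l := s.drop j)
  omega

lemma sg_le (s : List Bool) (j : ℕ) : sg s j ≤ j := by
  have h1 := List.count_le_length (a := true) (l := s.take j)
  have h2 := List.length_take (i := j) (l := s)
  rw [sg]; omega

lemma count_le_sg_add (s : List Bool) (j : ℕ) : s.count true ≤ sg s j + (s.length - j) := by
  rcases le_or_gt s.length j with h | h
  · rw [sg_big h]; omega
  · have := sg_add_le s j (s.length - j)
    rw [show j + (s.length - j) = s.length by omega, sg_big (le_refl _)] at this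
    omega

lemma count_take_ofFn {n : ℕ} (f : Fin n → Bool) (j : ℕ) :
    ((List.ofFn f).take j).count true = ∑ i : Fin n, (if (i:ℕ) < j ∧ f i = true then 1 else 0) := by
  induction n generalizing j with
  | zero => simp
  | succ m ih =>
      cases j with
      | zero => simp
      | succ k =>
          rw [List.ofFn_succ, List.take_succ_cons, List.count_cons, Fin.sum_univ_succ,
            ih (fun i => f i.succ) k]
          simp [Nat.succ_lt_succ_iff, add_comm]

lemma sg_indList {N : ℕ} (B : Finset (Fin N)) (j : ℕ) : sg (indList B) j = pc B j := by
  rw [sg, indList, count_take_ofFn, pc, Finset.card_filter]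
  rw [Finset.sum_congr rfl (fun (i : Fin N) _ => show (if (i:ℕ) < j ∧ decide (i ∈ B) = true then (1:ℕ) else 0)
      = if i ∈ B then (if (i:ℕ) < j then 1 else 0) else 0 by
    by_cases h1 : i ∈ B <;> by_cases h2 : (i:ℕ) < j <;> simp [h1, h2])]
  rw [Finset.sum_ite_mem, Finset.univ_inter]

lemma length_indList {N : ℕ} (B : Finset (Fin N)) : (indList B).length = N := by
  simp [indList]

lemma count_indList {N : ℕ} (B : Finset (Fin N)) : (indList B).count true = B.card := by
  have := sg_indList B N
  rw [sg, List.take_of_length_le (le_of_eq (length_indList B)), pc_big (le_refl N)] at this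
  exact this

lemma isFreedomBasis_iff (s : List Bool) (B : Finset (Fin s.length)) :
    IsFreedomBasis s B ↔ B.card = s.count true ∧ ∀ j, pc B j ≤ sg s j := by
  unfold IsFreedomBasis Dominates
  constructor
  · rintro ⟨h1, h2⟩
    exact ⟨h1, fun j => by have := h2 j; rwa [show ((indList B).take j).count true = sg (indList B) j from rfl, sg_indList] at this⟩
  · rintro ⟨h1, h2⟩
    exact ⟨h1, fun j => by have := h2 j; rwa [show ((indList B).take j).count true = sg (indList B) j from rfl, sg_indList]⟩

/-- Basis predicate over an arbitrary index bound `N`. -/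
def IsB (s : List Bool) {N : ℕ} (B : Finset (Fin N)) : Prop :=
  B.card = s.count true ∧ ∀ j, pc B j ≤ sg s j

noncomputable def rkL (s : List Bool) (N : ℕ) (A : Finset (Fin N)) : ℕ :=
  (Finset.univ.filter fun B : Finset (Fin N) => IsB s B).sup fun B => (A ∩ B).card

lemma rkL_le_crk (s : List Bool) {N : ℕ} (A : Finset (Fin N)) (j : ℕ) :
    rkL s N A ≤ sg s j + tc A j := by
  refine Finset.sup_le fun B hB => ?_
  have hB' := (Finset.mem_filter.1 hB).2
  exact le_trans (inter_card_le A B j) (Nat.add_le_add_right (hB'.2 j) _)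

lemma rkL_le_card (s : List Bool) {N : ℕ} (A : Finset (Fin N)) : rkL s N A ≤ A.card :=
  Finset.sup_le fun B _ => Finset.card_le_card Finset.inter_subset_left

lemma le_rkL (s : List Bool) {N : ℕ} (A B : Finset (Fin N)) (hB : IsB s B) :
    (A ∩ B).card ≤ rkL s N A := by
  unfold rkL
  exact Finset.le_sup (f := fun B => (A ∩ B).card) (Finset.mem_filter.2 ⟨Finset.mem_univ _, hB⟩)

lemma shrink {N : ℕ} (F : ℕ → ℕ) (R : ℕ) :
    ∀ (A : Finset (Fin N)), R ≤ A.card → (∀ j, R ≤ F j + tc A j) →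
      ∃ D, D ⊆ A ∧ D.card = R ∧ ∀ j, pc D j ≤ F j := by
  intro A
  induction A using Finset.strongInduction with
  | _ A ih =>
    intro hR hF
    rcases eq_or_lt_of_le hR with heq | hlt
    · refine ⟨A, Finset.Subset.refl _, heq.symm, fun j => ?_⟩
      have h1 := pc_add_tc A j
      have h2 := hF j
      omega
    · have hne : A.Nonempty := Finset.card_pos.1 (by omega)
      set m := A.min' hne with hm
      have hmA : m ∈ A := A.min'_mem hne
      have hsub : A.erase m ⊂ A := Finset.erase_ssubset hmA
      have hcard : (A.erase m).card = A.card - 1 := Finset.card_erase_of_mem hmA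
      have hFe : ∀ j, R ≤ F j + tc (A.erase m) j := by
        intro j
        rcases le_or_gt j (m:ℕ) with hj | hj
        · have htc : tc (A.erase m) j = (A.erase m).card := by
            rw [tc, Finset.filter_true_of_mem]
            intro i hi
            have h5 : m ≤ i := A.min'_le i (Finset.mem_of_mem_erase hi)
            have h6 : (m:ℕ) ≤ (i:ℕ) := h5
            omega
          omega
        · have htc : tc (A.erase m) j = tc A j := by
            rw [tc, tc, Finset.filter_erase, Finset.erase_eq_of_notMem]
            intro hc
            have := (Finset.mem_filter.1 hc).2
            omega
          have := hF j
          omega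
      obtain ⟨D, hD1, hD2, hD3⟩ := ih (A.erase m) hsub (by omega) hFe
      exact ⟨D, hD1.trans (Finset.erase_subset _ _), hD2, hD3⟩

lemma extend_aux (s : List Bool) {N : ℕ} (h : s.length = N) :
    ∀ (k : ℕ) (A : Finset (Fin N)), s.count true - A.card ≤ k → (∀ j, pc A j ≤ sg s j) →
      ∃ B, A ⊆ B ∧ B.card = s.count true ∧ ∀ j, pc B j ≤ sg s j := by
  intro k
  induction k with
  | zero =>
    intro A hk hA
    have hle : A.card ≤ s.count true := by
      have := hA N
      rw [pc_big (le_refl N), sg_big (le_of_eq h)] at this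
      exact this
    exact ⟨A, Finset.Subset.refl _, by omega, hA⟩
  | succ k ih =>
    intro A hk hA
    have hle : A.card ≤ s.count true := by
      have := hA N
      rw [pc_big (le_refl N), sg_big (le_of_eq h)] at this
      exact this
    rcases eq_or_lt_of_le hle with heq | hlt
    · exact ⟨A, Finset.Subset.refl _, heq, hA⟩
    · -- find the largest j with sg s j ≤ pc A j
      set J := (Finset.range (N+1)).filter fun j => sg s j ≤ pc A j with hJ
      have h0J : 0 ∈ J := by
        simp [hJ, sg_zero, pc_zero]
      have hJne : J.Nonempty := ⟨0, h0J⟩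
      obtain ⟨j1, hj1J, hj1max⟩ : ∃ j1 ∈ J, ∀ j ∈ J, j ≤ j1 :=
        ⟨J.max' hJne, J.max'_mem hJne, fun j hj => J.le_max' j hj⟩
      rw [hJ, Finset.mem_filter, Finset.mem_range] at hj1J
      have hj1N : j1 ≤ N := by omega
      have hkey : ∀ j, j1 < j → pc A j < sg s j := by
        intro j hj
        rcases le_or_gt j N with hjN | hjN
        · by_contra hc
          push_neg at hc
          have hjJ : j ∈ J := by
            rw [hJ, Finset.mem_filter, Finset.mem_range]
            constructor <;> omega
          have := hj1max j hjJ
          omega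
        · have h1 : pc A j = A.card := pc_big (by omega)
          have h2 : sg s j = s.count true := sg_big (by omega)
          omega
      -- find x ∉ A with j1 ≤ x
      have hx : ∃ x : Fin N, j1 ≤ (x:ℕ) ∧ x ∉ A := by
        by_contra hc
        push_neg at hc
        have hsub : (Finset.univ.filter fun i : Fin N => j1 ≤ (i:ℕ)) ⊆
            (A.filter fun i : Fin N => j1 ≤ (i:ℕ)) := by
          intro i hi
          have := (Finset.mem_filter.1 hi).2
          exact Finset.mem_filter.2 ⟨hc i this, this⟩
        have h1 : N - j1 ≤ tc A j1 := by
          rw [tc, ← card_filter_ge (N := N) j1]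
          exact Finset.card_le_card hsub
        have h3 : sg s j1 ≤ pc A j1 := hj1J.2
        have h4 := count_le_sg_add s j1
        rw [h] at h4
        have h5 := pc_add_tc A j1
        omega
      obtain ⟨x, hx1, hx2⟩ := hx
      have hA' : ∀ j, pc (insert x A) j ≤ sg s j := by
        intro j
        rw [pc_insert hx2]
        rcases le_or_gt j (x:ℕ) with hj | hj
        · have hx3 : ¬ ((x:ℕ) < j) := by omega
          rw [if_neg hx3]
          have := hA j
          omega
        · rw [if_pos hj]
          have := hkey j (by omega)
          omega
      have hcard : (insert x A).card = A.card + 1 := Finset.card_insert_of_notMem hx2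
      obtain ⟨B, hB1, hB2, hB3⟩ := ih (insert x A) (by omega) hA'
      exact ⟨B, (Finset.subset_insert x A).trans hB1, hB2, hB3⟩

lemma extend (s : List Bool) {N : ℕ} (h : s.length = N) (A : Finset (Fin N))
    (hA : ∀ j, pc A j ≤ sg s j) :
    ∃ B, A ⊆ B ∧ IsB s B :=
  (extend_aux s h (s.count true) A (by omega) hA).imp fun B hB => ⟨hB.1, hB.2.1, hB.2.2⟩

lemma rkL_eq_count_iff (s : List Bool) {N : ℕ} (h : s.length = N) (A : Finset (Fin N)) :
    rkL s N A = s.count true ↔ ∀ j, s.count true ≤ sg s j + tc A j := by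
  constructor
  · intro hr j
    rw [← hr]
    exact rkL_le_crk s A j
  · intro hc
    have hR : s.count true ≤ A.card := by
      have := hc 0
      rw [sg_zero, tc_zero] at this
      omega
    obtain ⟨D, hD1, hD2, hD3⟩ := shrink (sg s) (s.count true) A hR hc
    have h1 : (A ∩ D).card ≤ rkL s N A := le_rkL s A D ⟨hD2, hD3⟩
    rw [Finset.inter_eq_right.2 hD1] at h1
    have h2 : rkL s N A ≤ s.count true := by
      have := rkL_le_crk s A N
      rwa [sg_big (le_of_eq h), tc_big (le_refl N), Nat.add_zero] at this
    omega

lemma rkL_eq_card_iff (s : List Bool) {N : ℕ} (h : s.length = N) (A : Finset (Fin N)) :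
    rkL s N A = A.card ↔ ∀ j, pc A j ≤ sg s j := by
  constructor
  · intro hr j
    have h1 := rkL_le_crk s A j
    have h2 := pc_add_tc A j
    omega
  · intro hA
    obtain ⟨B, hB1, hB2⟩ := extend s h A hA
    have h1 : (A ∩ B).card ≤ rkL s N A := le_rkL s A B hB2
    rw [Finset.inter_eq_left.2 hB1] at h1
    have h2 := rkL_le_card s A
    omega

lemma freedomRk_eq_rkL (s : List Bool) (A : Finset (Fin s.length)) :
    freedomRk s A = rkL s s.length A := by
  unfold freedomRk rkL
  congr 1
  apply Finset.filter_congr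
  intro B _
  rw [isFreedomBasis_iff]
  rfl

lemma rkL_map (s : List Bool) {N : ℕ} (h : s.length = N) (A : Finset (Fin s.length)) :
    rkL s N (A.map (finCongr h).toEmbedding) = rkL s s.length A := by
  subst h
  simp [finCongr_refl]

lemma freedomTutte_eq (K : Type*) [Field K] (s : List Bool) {N : ℕ} (h : s.length = N) :
    freedomTutte K s = ∑ A : Finset (Fin N),
      (X 0 - 1) ^ (s.count true - rkL s N A) * (X 1 - 1) ^ (A.card - rkL s N A) := by
  unfold freedomTutte tutte
  refine Fintype.sum_equiv ((finCongr h).finsetCongr) _ _ fun A => ?_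
  rw [Equiv.finsetCongr_apply, Finset.card_map, rkL_map s h, freedomRk_eq_rkL]

def wc {N : ℕ} (A : Finset (Fin N)) (l m : ℕ) : ℕ :=
  (A.filter fun i : Fin N => l ≤ (i:ℕ) ∧ (i:ℕ) < m).card

lemma wc_zero_left {N : ℕ} (A : Finset (Fin N)) (m : ℕ) : wc A 0 m = pc A m := by
  rw [wc, pc]
  congr 1
  exact Finset.filter_congr fun i _ => by omega

lemma tc_eq_wc {N : ℕ} (A : Finset (Fin N)) (l : ℕ) : tc A l = wc A l N := by
  rw [wc, tc]
  congr 1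
  exact Finset.filter_congr fun i _ => by
    have := i.isLt
    constructor
    · intro h'; exact ⟨h', i.isLt⟩
    · intro h'; exact h'.1

lemma wc_split {N : ℕ} (A : Finset (Fin N)) {l m m' : ℕ} (h1 : l ≤ m) (h2 : m ≤ m') :
    wc A l m' = wc A l m + wc A m m' := by
  classical
  have key := Finset.card_filter_add_card_filter_not
    (s := A.filter fun i : Fin N => l ≤ (i:ℕ) ∧ (i:ℕ) < m') (p := fun i : Fin N => (i:ℕ) < m)
  rw [Finset.filter_filter, Finset.filter_filter] at key
  have e1 : (A.filter fun i : Fin N => (l ≤ (i:ℕ) ∧ (i:ℕ) < m') ∧ (i:ℕ) < m)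
      = A.filter fun i : Fin N => l ≤ (i:ℕ) ∧ (i:ℕ) < m :=
    Finset.filter_congr fun i _ => by omega
  have e2 : (A.filter fun i : Fin N => (l ≤ (i:ℕ) ∧ (i:ℕ) < m') ∧ ¬ ((i:ℕ) < m))
      = A.filter fun i : Fin N => m ≤ (i:ℕ) ∧ (i:ℕ) < m' :=
    Finset.filter_congr fun i _ => by omega
  rw [e1, e2] at key
  rw [wc, wc, wc, ← key]

lemma wc_empty {N : ℕ} (A : Finset (Fin N)) {l m : ℕ} (h : m ≤ l) : wc A l m = 0 := by
  rw [wc, Finset.card_eq_zero]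
  exact Finset.filter_false_of_mem fun i _ => by omega

lemma wc_le {N : ℕ} (A : Finset (Fin N)) {l m : ℕ} (hm : m ≤ N) : wc A l m ≤ m - l := by
  have h2 : wc (Finset.univ : Finset (Fin N)) l m = m - l := by
    rw [wc, card_filter_interval hm]
  have h1 : wc A l m ≤ wc (Finset.univ : Finset (Fin N)) l m := Finset.card_le_card
    (Finset.filter_subset_filter _ (Finset.subset_univ A))
  omega

lemma pc_eq_wc {N : ℕ} (A : Finset (Fin N)) {l m : ℕ} (h : l ≤ m) :
    pc A m = pc A l + wc A l m := by
  rw [← wc_zero_left, ← wc_zero_left, wc_split A (Nat.zero_le l) h]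

lemma tc_split_wc {N : ℕ} (A : Finset (Fin N)) {l m : ℕ} (h1 : l ≤ m) (h2 : m ≤ N) :
    tc A l = wc A l m + tc A m := by
  rw [tc_eq_wc, tc_eq_wc, wc_split A h1 h2]

/-- The subset of `A` lying in the window `[c, c+k)`, re-indexed as a subset of `Fin k`. -/
def res (c k : ℕ) {N : ℕ} (h : c + k ≤ N) (A : Finset (Fin N)) : Finset (Fin k) :=
  Finset.univ.filter fun i : Fin k => (⟨c + (i:ℕ), by omega⟩ : Fin N) ∈ A

lemma card_res_filter (c k : ℕ) {N : ℕ} (h : c + k ≤ N) (A : Finset (Fin N))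
    (p : ℕ → Prop) [DecidablePred p] :
    ((res c k h A).filter fun i : Fin k => p (i:ℕ)).card
      = (A.filter fun x : Fin N => c ≤ (x:ℕ) ∧ (x:ℕ) < c + k ∧ p ((x:ℕ) - c)).card := by
  refine Finset.card_bij (fun i _ => (⟨c + (i:ℕ), by omega⟩ : Fin N)) ?_ ?_ ?_
  · intro i hi
    rw [Finset.mem_filter] at hi
    have h1 := hi.1
    rw [res, Finset.mem_filter] at h1
    have hlt : (⟨c + (i:ℕ), by omega⟩ : Fin N).val < c + k := by
      have := i.isLt; show c + (i:ℕ) < c + k; omega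
    refine Finset.mem_filter.2 ⟨h1.2, show c ≤ c + (i:ℕ) by omega, hlt, ?_⟩
    show p (c + (i:ℕ) - c)
    rw [Nat.add_sub_cancel_left]
    exact hi.2
  · intro i _ i' _ hee
    have : c + (i:ℕ) = c + (i':ℕ) := congrArg Fin.val hee
    exact Fin.ext (by omega)
  · intro x hx
    rw [Finset.mem_filter] at hx
    obtain ⟨hxA, hx1, hx2, hx3⟩ := hx
    refine ⟨⟨(x:ℕ) - c, by omega⟩, ?_, ?_⟩
    · refine Finset.mem_filter.2 ⟨?_, hx3⟩
      rw [res, Finset.mem_filter]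
      refine ⟨Finset.mem_univ _, ?_⟩
      have he : (⟨c + ((x:ℕ) - c), by omega⟩ : Fin N) = x := Fin.ext (show c + ((x:ℕ) - c) = (x:ℕ) by omega)
      rwa [he]
    · exact Fin.ext (show c + ((x:ℕ) - c) = (x:ℕ) by omega)

lemma card_res (c k : ℕ) {N : ℕ} (h : c + k ≤ N) (A : Finset (Fin N)) :
    (res c k h A).card = wc A c (c + k) := by
  have := card_res_filter c k h A (fun _ => True)
  simpa [wc] using this

lemma pc_res (c k : ℕ) {N : ℕ} (h : c + k ≤ N) (A : Finset (Fin N)) (j : ℕ) :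
    pc (res c k h A) j = wc A c (c + min j k) := by
  rw [pc, card_res_filter c k h A (fun t => t < j), wc]
  congr 1
  exact Finset.filter_congr fun i _ => by omega

lemma tc_res (c k : ℕ) {N : ℕ} (h : c + k ≤ N) (A : Finset (Fin N)) (j : ℕ) :
    tc (res c k h A) j = wc A (c + j) (c + k) := by
  rw [tc, card_res_filter c k h A (fun t => j ≤ t), wc]
  congr 1
  exact Finset.filter_congr fun i _ => by omega

def sMain (u v : List Bool) (a b : ℕ) : List Bool :=
  u ++ List.replicate a true ++ List.replicate b false ++ v

def sSwap (u v : List Bool) (a b : ℕ) : List Bool :=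
  u ++ List.replicate (a - 1) true ++ [false, true] ++ List.replicate (b - 1) false ++ v

section Concrete

variable (u v : List Bool) (a b : ℕ)

lemma length_sMain : (sMain u v a b).length = u.length + a + b + v.length := by
  simp [sMain]
  omega

lemma length_sSwap (ha : 1 ≤ a) (hb : 1 ≤ b) :
    (sSwap u v a b).length = u.length + a + b + v.length := by
  simp only [sSwap, List.length_append, List.length_replicate, List.length_cons,
    List.length_nil]
  omega

lemma count_sMain : (sMain u v a b).count true = u.count true + a + v.count true := by
  simp [sMain, List.count_append, List.count_replicate]
  omega

lemma count_sSwap (ha : 1 ≤ a) :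
    (sSwap u v a b).count true = u.count true + a + v.count true := by
  simp [sSwap, List.count_append, List.count_replicate]
  omega

lemma sg_sMain (j : ℕ) :
    sg (sMain u v a b) j = sg u j + min (j - u.length) a + sg v (j - (u.length + a + b)) := by
  rw [sMain, sg_append, sg_append, sg_append, sg_rep_true, sg_rep_false]
  simp only [List.length_append, List.length_replicate]
  omega

lemma sg_sSwap (ha : 1 ≤ a) (hb : 1 ≤ b) (j : ℕ) :
    sg (sSwap u v a b) j = sg u j + min (j - u.length) (a - 1) + min (j - (u.length + a)) 1
      + sg v (j - (u.length + a + b)) := by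
  have hft : ([false, true] : List Bool) = List.replicate 1 false ++ List.replicate 1 true := rfl
  rw [sSwap, hft, sg_append, sg_append, sg_append, sg_append, sg_append,
    sg_rep_true, sg_rep_true, sg_rep_false, sg_rep_false]
  simp only [List.length_append, List.length_replicate]
  have e2 : j - (u.length + (a - 1) + (1 + 1) + (b - 1)) = j - (u.length + a + b) := by omega
  rw [e2]
  omega

lemma sg_sSwap_eq (ha : 1 ≤ a) (hb : 1 ≤ b) (j : ℕ) :
    sg (sSwap u v a b) j =
      if j = u.length + a then sg (sMain u v a b) j - 1 else sg (sMain u v a b) j := by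
  rw [sg_sSwap u v a b ha hb, sg_sMain]
  split_ifs with h
  · subst h
    have h1 : sg u (u.length + a) = u.count true := sg_big (by omega)
    omega
  · omega

lemma sg_sMain_p (ha : 1 ≤ a) : sg (sMain u v a b) (u.length + a) = u.count true + a := by
  rw [sg_sMain]
  have h1 : sg u (u.length + a) = u.count true := sg_big (by omega)
  have h2 : u.length + a - (u.length + a + b) = 0 := by omega
  rw [h2, sg_zero]
  omega

end Concrete

lemma pc_empty {N : ℕ} (j : ℕ) : pc (∅ : Finset (Fin N)) j = 0 := by simp [pc]

lemma wc_full {N : ℕ} {A : Finset (Fin N)} {l m : ℕ} (hm : m ≤ N)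
    (h : ∀ i : Fin N, l ≤ (i:ℕ) → (i:ℕ) < m → i ∈ A) : wc A l m = m - l := by
  refine le_antisymm (wc_le A hm) ?_
  have hsub : (Finset.univ.filter fun i : Fin N => l ≤ (i:ℕ) ∧ (i:ℕ) < m)
      ⊆ A.filter fun i : Fin N => l ≤ (i:ℕ) ∧ (i:ℕ) < m := by
    intro i hi
    have h2 := (Finset.mem_filter.1 hi).2
    exact Finset.mem_filter.2 ⟨h i h2.1 h2.2, h2⟩
  have := Finset.card_le_card hsub
  rwa [card_filter_interval hm] at this

lemma wc_none {N : ℕ} {A : Finset (Fin N)} {l m : ℕ}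
    (h : ∀ i : Fin N, l ≤ (i:ℕ) → (i:ℕ) < m → i ∉ A) : wc A l m = 0 := by
  rw [wc, Finset.card_eq_zero]
  refine Finset.filter_false_of_mem fun i hi => ?_
  intro hc
  exact h i hc.1 hc.2 hi

lemma wc_none_up {N : ℕ} (A : Finset (Fin N)) {l m : ℕ} (h : N ≤ l) : wc A l m = 0 :=
  wc_none fun i hi _ => absurd (lt_of_lt_of_le i.isLt (le_trans h hi)) (lt_irrefl _)

lemma wc_single_mem {N : ℕ} {A : Finset (Fin N)} {i : Fin N} (h : i ∈ A) :
    1 ≤ wc A (i:ℕ) ((i:ℕ)+1) := by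
  rw [wc]
  refine Finset.card_pos.2 ⟨i, Finset.mem_filter.2 ⟨h, le_refl _, by omega⟩⟩

lemma wc_single_not_mem {N : ℕ} {A : Finset (Fin N)} {i : Fin N} (h : i ∉ A) :
    wc A (i:ℕ) ((i:ℕ)+1) = 0 := by
  refine wc_none fun x hx1 hx2 hc => ?_
  have : x = i := Fin.ext (by omega)
  exact h (this ▸ hc)

lemma tc_filter_lt {N : ℕ} (A : Finset (Fin N)) (c j : ℕ) :
    tc (A.filter fun i : Fin N => (i:ℕ) < c) j = wc A j c := by
  rw [tc, wc, Finset.filter_filter]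
  congr 1
  exact Finset.filter_congr fun i _ => by omega

section Core

variable {u v : List Bool} {a b : ℕ} {N : ℕ}

lemma rk_swap_le (ha : 1 ≤ a) (hb : 1 ≤ b) (A : Finset (Fin N)) :
    rkL (sSwap u v a b) N A ≤ rkL (sMain u v a b) N A := by
  unfold rkL
  refine Finset.sup_mono ?_
  intro B hB
  rw [Finset.mem_filter] at hB ⊢
  obtain ⟨h1, h2, h3⟩ := hB
  refine ⟨h1, ?_, fun j => ?_⟩
  · rw [h2, count_sSwap u v a b ha, count_sMain]
  · have := h3 j
    have he := sg_sSwap_eq u v a b ha hb j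
    split_ifs at he <;> omega

lemma exists_basis (s : List Bool) (h : s.length = N) : ∃ B : Finset (Fin N), IsB s B := by
  obtain ⟨B, _, hB⟩ := extend s h ∅ (fun j => by rw [pc_empty]; exact Nat.zero_le _)
  exact ⟨B, hB⟩

lemma rk_attained (s : List Bool) (h : s.length = N) (A : Finset (Fin N)) :
    ∃ B, IsB s B ∧ rkL s N A = (A ∩ B).card := by
  obtain ⟨B₀, hB₀⟩ := exists_basis s h
  have hne : (Finset.univ.filter fun B : Finset (Fin N) => IsB s B).Nonempty :=
    ⟨B₀, Finset.mem_filter.2 ⟨Finset.mem_univ _, hB₀⟩⟩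
  obtain ⟨B, hBmem, hBsup⟩ := Finset.exists_mem_eq_sup _ hne (fun B : Finset (Fin N) => (A ∩ B).card)
  exact ⟨B, (Finset.mem_filter.1 hBmem).2, hBsup⟩

end Core

section Swap

variable {u v : List Bool} {a b : ℕ} {N : ℕ}

lemma swap_basis (ha : 1 ≤ a) (hb : 1 ≤ b) (hN : N = u.length + a + b + v.length)
    {B : Finset (Fin N)} (hB : IsB (sMain u v a b) B)
    {t x : Fin N} (htB : t ∈ B) (htp : (t:ℕ) < u.length + a)
    (hxB : x ∉ B) (hxp : u.length + a ≤ (x:ℕ)) :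
    IsB (sSwap u v a b) (insert x (B.erase t)) := by
  have hxe : x ∉ B.erase t := fun hc => hxB (Finset.mem_of_mem_erase hc)
  constructor
  · rw [Finset.card_insert_of_notMem hxe, Finset.card_erase_of_mem htB, hB.1,
      count_sSwap u v a b ha, count_sMain]
    have : 1 ≤ B.card := Finset.card_pos.2 ⟨t, htB⟩
    rw [hB.1, count_sMain] at this
    omega
  · intro j
    have e1 := pc_insert hxe j
    have e2 := pc_erase htB j
    have h3 := hB.2 j
    have he := sg_sSwap_eq u v a b ha hb j
    split_ifs at e1 e2 he <;> omega

lemma rk_swap_ge (ha : 1 ≤ a) (hb : 1 ≤ b) (hN : N = u.length + a + b + v.length)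
    (A : Finset (Fin N)) :
    min (rkL (sMain u v a b) N A) (u.count true + a + tc A (u.length + a) - 1)
      ≤ rkL (sSwap u v a b) N A := by
  have hlenS : (sMain u v a b).length = N := by rw [length_sMain]; omega
  have hlenS' : (sSwap u v a b).length = N := by rw [length_sSwap u v a b ha hb]; omega
  obtain ⟨B, hB, hrk⟩ := rk_attained (sMain u v a b) hlenS A
  by_cases hpc : pc B (u.length + a) < sg (sMain u v a b) (u.length + a)
  · -- B is already a basis of the swapped sequence
    have hB' : IsB (sSwap u v a b) B := by
      refine ⟨by rw [hB.1, count_sSwap u v a b ha, count_sMain], fun j => ?_⟩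
      have h3 := hB.2 j
      have he := sg_sSwap_eq u v a b ha hb j
      split_ifs at he with hj
      · subst hj; omega
      · omega
    calc min _ _ ≤ rkL (sMain u v a b) N A := min_le_left _ _
      _ = (A ∩ B).card := hrk
      _ ≤ _ := le_rkL _ A B hB'
  · push_neg at hpc
    have hpe : pc B (u.length + a) = sg (sMain u v a b) (u.length + a) :=
      le_antisymm (hB.2 _) hpc
    rw [sg_sMain_p u v a b ha] at hpe
    -- there is an element of B below p
    have htex : ∃ t, t ∈ B ∧ (t:ℕ) < u.length + a := by
      have h1 : 0 < pc B (u.length + a) := by omega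
      obtain ⟨t, ht⟩ := Finset.card_pos.1 h1
      rw [Finset.mem_filter] at ht
      exact ⟨t, ht.1, ht.2⟩
    -- there is a position ≥ p outside B
    have hrv : v.count true ≤ v.length := by
      have := sg_le v v.length
      rw [sg_big (le_refl _)] at this
      exact this
    have hxex : ∃ x : Fin N, u.length + a ≤ (x:ℕ) ∧ x ∉ B := by
      by_contra hc
      push_neg at hc
      have hsub : (Finset.univ.filter fun i : Fin N => u.length + a ≤ (i:ℕ))
          ⊆ B.filter fun i : Fin N => u.length + a ≤ (i:ℕ) := by
        intro i hi
        have h2 := (Finset.mem_filter.1 hi).2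
        exact Finset.mem_filter.2 ⟨hc i h2, h2⟩
      have h1 := Finset.card_le_card hsub
      rw [card_filter_ge] at h1
      have h2 : pc B (u.length + a) + tc B (u.length + a) = B.card := pc_add_tc B _
      have h3 : B.card = u.count true + a + v.count true := by
        rw [hB.1, count_sMain]
      have : (B.filter fun i : Fin N => u.length + a ≤ (i:ℕ)).card = tc B (u.length + a) := rfl
      omega
    by_cases htS : ∃ t, t ∈ B ∧ (t:ℕ) < u.length + a ∧ t ∉ A
    · obtain ⟨t, htB, htp, htA⟩ := htS
      obtain ⟨x, hxp, hxB⟩ := hxex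
      have hBasis := swap_basis ha hb hN hB htB htp hxB hxp
      have hsub : A ∩ B ⊆ A ∩ insert x (B.erase t) := by
        intro i hi
        rw [Finset.mem_inter] at hi ⊢
        refine ⟨hi.1, Finset.mem_insert.2 (Or.inr (Finset.mem_erase.2 ⟨?_, hi.2⟩))⟩
        intro hit
        exact htA (hit ▸ hi.1)
      calc min _ _ ≤ rkL (sMain u v a b) N A := min_le_left _ _
        _ = (A ∩ B).card := hrk
        _ ≤ (A ∩ insert x (B.erase t)).card := Finset.card_le_card hsub
        _ ≤ _ := le_rkL _ A _ hBasis
    · push_neg at htS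
      obtain ⟨t, htB, htp⟩ := htex
      have htA : t ∈ A := htS t htB htp
      by_cases hxS : ∃ x : Fin N, u.length + a ≤ (x:ℕ) ∧ x ∉ B ∧ x ∈ A
      · obtain ⟨x, hxp, hxB, hxA⟩ := hxS
        have hBasis := swap_basis ha hb hN hB htB htp hxB hxp
        have hsub : insert x ((A ∩ B).erase t) ⊆ A ∩ insert x (B.erase t) := by
          intro i hi
          rcases Finset.mem_insert.1 hi with hix | hie
          · subst hix
            exact Finset.mem_inter.2 ⟨hxA, Finset.mem_insert_self _ _⟩
          · rw [Finset.mem_erase, Finset.mem_inter] at hie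
            exact Finset.mem_inter.2 ⟨hie.2.1,
              Finset.mem_insert.2 (Or.inr (Finset.mem_erase.2 ⟨hie.1, hie.2.2⟩))⟩
        have hxni : x ∉ (A ∩ B).erase t := fun hc =>
          hxB (Finset.mem_inter.1 (Finset.mem_of_mem_erase hc)).2
        have htAB : t ∈ A ∩ B := Finset.mem_inter.2 ⟨htA, htB⟩
        have hc1 : (insert x ((A ∩ B).erase t)).card = (A ∩ B).card := by
          rw [Finset.card_insert_of_notMem hxni, Finset.card_erase_of_mem htAB]
          have : 1 ≤ (A ∩ B).card := Finset.card_pos.2 ⟨t, htAB⟩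
          omega
        calc min _ _ ≤ rkL (sMain u v a b) N A := min_le_left _ _
          _ = (A ∩ B).card := hrk
          _ = (insert x ((A ∩ B).erase t)).card := hc1.symm
          _ ≤ (A ∩ insert x (B.erase t)).card := Finset.card_le_card hsub
          _ ≤ _ := le_rkL _ A _ hBasis
      · -- every position ≥ p of A is in B, every position < p of B is in A
        push_neg at hxS
        obtain ⟨x, hxp, hxB⟩ := hxex
        have hBasis := swap_basis ha hb hN hB htB htp hxB hxp
        have key : (A ∩ B).card = u.count true + a + tc A (u.length + a) := by
          have h1 : pc (A ∩ B) (u.length + a) = pc B (u.length + a) := by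
            refine le_antisymm (pc_mono_set Finset.inter_subset_right _) ?_
            refine Finset.card_le_card ?_
            intro i hi
            rw [Finset.mem_filter] at hi ⊢
            exact ⟨Finset.mem_inter.2 ⟨htS i hi.1 hi.2, hi.1⟩, hi.2⟩
          have h2 : tc (A ∩ B) (u.length + a) = tc A (u.length + a) := by
            refine le_antisymm (tc_mono_set Finset.inter_subset_left _) ?_
            refine Finset.card_le_card ?_
            intro i hi
            rw [Finset.mem_filter] at hi ⊢
            exact ⟨Finset.mem_inter.2 ⟨hi.1, by_contra fun hc => hxS i hi.2 hc hi.1⟩, hi.2⟩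
          have h3 := pc_add_tc (A ∩ B) (u.length + a)
          omega
        have hsub : (A ∩ B).erase t ⊆ A ∩ insert x (B.erase t) := by
          intro i hi
          rw [Finset.mem_erase, Finset.mem_inter] at hi
          exact Finset.mem_inter.2 ⟨hi.2.1,
            Finset.mem_insert.2 (Or.inr (Finset.mem_erase.2 ⟨hi.1, hi.2.2⟩))⟩
        have htAB : t ∈ A ∩ B := Finset.mem_inter.2 ⟨htA, htB⟩
        have hc1 : ((A ∩ B).erase t).card = (A ∩ B).card - 1 := Finset.card_erase_of_mem htAB
        have hle := le_rkL (sSwap u v a b) A _ hBasis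
        have hcc := Finset.card_le_card hsub
        omega

end Swap

/-- The predicate describing the sets whose rank drops when passing from
`u 1^a 0^b v` to `u 1^(a-1) 0 1 0^(b-1) v`. -/
def PA (u v : List Bool) (a b : ℕ) {N : ℕ} (A : Finset (Fin N)) : Prop :=
  (∀ i : Fin N, u.length ≤ (i:ℕ) → (i:ℕ) < u.length + a → i ∈ A) ∧
  (∀ i : Fin N, u.length + a ≤ (i:ℕ) → (i:ℕ) < u.length + a + b → i ∉ A) ∧
  (∀ j, u.count true ≤ sg u j + wc A j u.length) ∧
  (∀ j, wc A (u.length + a + b) (u.length + a + b + j) ≤ sg v j)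

section CoreTwo

variable {u v : List Bool} {a b : ℕ} {N : ℕ}

lemma not_PA_crk (ha : 1 ≤ a) (hb : 1 ≤ b) (hN : N = u.length + a + b + v.length)
    (A : Finset (Fin N)) (h : ¬ PA u v a b A) :
    ∃ j, sg (sMain u v a b) j + tc A j + 1
      ≤ sg (sMain u v a b) (u.length + a) + tc A (u.length + a) := by
  have hsgp := sg_sMain_p u v a b ha
  by_cases h1 : ∀ i : Fin N, u.length ≤ (i:ℕ) → (i:ℕ) < u.length + a → i ∈ A
  case neg =>
    push_neg at h1
    obtain ⟨i, hi1, hi2, hiA⟩ := h1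
    refine ⟨(i:ℕ), ?_⟩
    have hsgj : sg (sMain u v a b) (i:ℕ) = u.count true + ((i:ℕ) - u.length) := by
      rw [sg_sMain]
      have e1 : sg u (i:ℕ) = u.count true := sg_big (by omega)
      have e2 : (i:ℕ) - (u.length + a + b) = 0 := by omega
      rw [e1, e2, sg_zero]
      omega
    have hsplit : tc A (i:ℕ) = wc A (i:ℕ) (u.length + a) + tc A (u.length + a) :=
      tc_split_wc A (by omega) (by omega)
    have hw1 : wc A (i:ℕ) (u.length + a) = wc A (i:ℕ) ((i:ℕ)+1) + wc A ((i:ℕ)+1) (u.length + a) :=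
      wc_split A (by omega) (by omega)
    have hw2 : wc A (i:ℕ) ((i:ℕ)+1) = 0 := wc_single_not_mem hiA
    have hw3 : wc A ((i:ℕ)+1) (u.length + a) ≤ u.length + a - ((i:ℕ)+1) :=
      wc_le A (by omega)
    omega
  by_cases h2 : ∀ i : Fin N, u.length + a ≤ (i:ℕ) → (i:ℕ) < u.length + a + b → i ∉ A
  case neg =>
    push_neg at h2
    obtain ⟨i, hi1, hi2, hiA⟩ := h2
    refine ⟨(i:ℕ) + 1, ?_⟩
    have hsgj : sg (sMain u v a b) ((i:ℕ)+1) = u.count true + a := by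
      rw [sg_sMain]
      have e1 : sg u ((i:ℕ)+1) = u.count true := sg_big (by omega)
      have e2 : (i:ℕ)+1 - (u.length + a + b) = 0 := by omega
      rw [e1, e2, sg_zero]
      omega
    have hsplit : tc A (u.length + a) = wc A (u.length + a) ((i:ℕ)+1) + tc A ((i:ℕ)+1) :=
      tc_split_wc A (by omega) (by omega)
    have hw1 : wc A (u.length + a) ((i:ℕ)+1) = wc A (u.length + a) (i:ℕ) + wc A (i:ℕ) ((i:ℕ)+1) :=
      wc_split A (by omega) (by omega)
    have hw2 := wc_single_mem hiA
    omega
  by_cases h3 : ∀ j, u.count true ≤ sg u j + wc A j u.length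
  case neg =>
    push_neg at h3
    obtain ⟨j, hj⟩ := h3
    have hjlt : j < u.length := by
      by_contra hc
      push_neg at hc
      rw [sg_big hc] at hj
      omega
    refine ⟨j, ?_⟩
    have hsgj : sg (sMain u v a b) j = sg u j := by
      rw [sg_sMain]
      have e1 : j - u.length = 0 := by omega
      have e2 : j - (u.length + a + b) = 0 := by omega
      rw [e1, e2, sg_zero]
      omega
    have hsplit : tc A j = wc A j u.length + wc A u.length (u.length + a)
        + wc A (u.length + a) (u.length + a + b) + tc A (u.length + a + b) := by
      rw [tc_split_wc A (show j ≤ u.length by omega) (show u.length ≤ N by omega),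
        tc_split_wc A (show u.length ≤ u.length + a by omega) (show u.length + a ≤ N by omega),
        tc_split_wc A (show u.length + a ≤ u.length + a + b by omega)
          (show u.length + a + b ≤ N by omega)]
      omega
    have hfull : wc A u.length (u.length + a) = a := by
      have := wc_full (A := A) (l := u.length) (m := u.length + a) (by omega) h1
      omega
    have hnone : wc A (u.length + a) (u.length + a + b) = 0 := wc_none h2
    have hsplit2 : tc A (u.length + a) = wc A (u.length + a) (u.length + a + b)
        + tc A (u.length + a + b) :=
      tc_split_wc A (by omega) (by omega)
    omega
  by_cases h4 : ∀ j, wc A (u.length + a + b) (u.length + a + b + j) ≤ sg v j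
  case neg =>
    push_neg at h4
    obtain ⟨j, hj⟩ := h4
    have hjv : sg v j + 1 ≤ wc A (u.length + a + b) (u.length + a + b + min j v.length) := by
      rcases le_or_gt j v.length with hc | hc
      · rw [min_eq_left hc]; omega
      · have e1 : wc A (u.length + a + b) (u.length + a + b + j)
            = wc A (u.length + a + b) (u.length + a + b + v.length)
              + wc A (u.length + a + b + v.length) (u.length + a + b + j) :=
          wc_split A (by omega) (by omega)
        have e2 : wc A (u.length + a + b + v.length) (u.length + a + b + j) = 0 :=
          wc_none_up A (by omega)
        have e3 : sg v j = sg v v.length := by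
          rw [sg_big (by omega), sg_big (le_refl _)]
        have e4 : sg v v.length ≤ sg v j := sg_mono (by omega)
        rw [min_eq_right (by omega)]
        omega
    set j' := min j v.length with hj'
    refine ⟨u.length + a + b + j', ?_⟩
    have hsgj : sg (sMain u v a b) (u.length + a + b + j') = u.count true + a + sg v j' := by
      rw [sg_sMain]
      have e1 : sg u (u.length + a + b + j') = u.count true := sg_big (by omega)
      have e2 : u.length + a + b + j' - (u.length + a + b) = j' := by omega
      rw [e1, e2]
      omega
    have hsplit : tc A (u.length + a) = wc A (u.length + a) (u.length + a + b)
        + wc A (u.length + a + b) (u.length + a + b + j') + tc A (u.length + a + b + j') := by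
      rw [tc_split_wc A (show u.length + a ≤ u.length + a + b by omega)
          (show u.length + a + b ≤ N by omega),
        tc_split_wc A (show u.length + a + b ≤ u.length + a + b + j' by omega)
          (show u.length + a + b + j' ≤ N by omega)]
      omega
    have hnone : wc A (u.length + a) (u.length + a + b) = 0 := wc_none h2
    have hsgv : sg v j' ≤ sg v j := sg_mono (by omega)
    omega
  exact absurd ⟨h1, h2, h3, h4⟩ h

end CoreTwo

section CoreThree

variable {u v : List Bool} {a b : ℕ} {N : ℕ}

lemma rk_eq_of_not_PA (ha : 1 ≤ a) (hb : 1 ≤ b) (hN : N = u.length + a + b + v.length)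
    (A : Finset (Fin N)) (h : ¬ PA u v a b A) :
    rkL (sSwap u v a b) N A = rkL (sMain u v a b) N A := by
  refine le_antisymm (rk_swap_le ha hb A) ?_
  obtain ⟨j, hj⟩ := not_PA_crk ha hb hN A h
  have h1 := rkL_le_crk (sMain u v a b) A j
  have h2 := rk_swap_ge ha hb hN A
  have h3 := sg_sMain_p u v a b ha
  omega

lemma rk_of_PA (ha : 1 ≤ a) (hb : 1 ≤ b) (hN : N = u.length + a + b + v.length)
    (A : Finset (Fin N)) (h : PA u v a b A) :
    rkL (sMain u v a b) N A
        = u.count true + a + wc A (u.length + a + b) N ∧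
      rkL (sSwap u v a b) N A
        = u.count true + a + wc A (u.length + a + b) N - 1 := by
  obtain ⟨h1, h2, h3, h4⟩ := h
  have hlenS : (sMain u v a b).length = N := by rw [length_sMain]; omega
  have hsgp := sg_sMain_p u v a b ha
  -- tc A p = wc A z N
  have htcp : tc A (u.length + a) = wc A (u.length + a + b) N := by
    rw [tc_split_wc A (show u.length + a ≤ u.length + a + b by omega)
      (show u.length + a + b ≤ N by omega), wc_none h2, tc_eq_wc]
    omega
  -- upper bound for the main rank
  have hup : rkL (sMain u v a b) N A ≤ u.count true + a + wc A (u.length + a + b) N := by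
    have := rkL_le_crk (sMain u v a b) A (u.length + a)
    omega
  -- lower bound: build a basis meeting A in many elements
  have hlow : u.count true + a + wc A (u.length + a + b) N ≤ rkL (sMain u v a b) N A := by
    -- shrink the part of A below u.length to a basis of F(u)
    have hshr := shrink (F := sg u) (R := u.count true)
      (A := A.filter fun i : Fin N => (i:ℕ) < u.length) ?_ ?_
    · obtain ⟨D, hD1, hD2, hD3⟩ := hshr
      set blockM := Finset.univ.filter
        (fun i : Fin N => u.length ≤ (i:ℕ) ∧ (i:ℕ) < u.length + a) with hblockM
      set AV := A.filter (fun i : Fin N => u.length + a + b ≤ (i:ℕ)) with hAV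
      set B₀ := D ∪ blockM ∪ AV with hB₀
      have hDval : ∀ i ∈ D, (i:ℕ) < u.length := by
        intro i hi
        exact (Finset.mem_filter.1 (hD1 hi)).2
      have hBval : ∀ i ∈ blockM, u.length ≤ (i:ℕ) ∧ (i:ℕ) < u.length + a := by
        intro i hi
        exact (Finset.mem_filter.1 hi).2
      have hVval : ∀ i ∈ AV, u.length + a + b ≤ (i:ℕ) := by
        intro i hi
        exact (Finset.mem_filter.1 hi).2
      have hd1 : Disjoint D blockM := Finset.disjoint_left.2 fun i hi hib => by
        have := hDval i hi; have := hBval i hib; omega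
      have hd2 : Disjoint (D ∪ blockM) AV := Finset.disjoint_left.2 fun i hi hiv => by
        have := hVval i hiv
        rcases Finset.mem_union.1 hi with hh | hh
        · have := hDval i hh; omega
        · have := (hBval i hh).2; omega
      have hcard : B₀.card = u.count true + a + wc A (u.length + a + b) N := by
        rw [hB₀, Finset.card_union_of_disjoint hd2, Finset.card_union_of_disjoint hd1, hD2]
        have hbm : blockM.card = a := by
          rw [hblockM]
          have := card_filter_interval (N := N) (l := u.length) (m := u.length + a) (by omega)
          omega
        have hav : AV.card = wc A (u.length + a + b) N := by
          rw [hAV, ← tc_eq_wc]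
          rfl
        omega
      have hsubA : B₀ ⊆ A := by
        intro i hi
        rcases Finset.mem_union.1 hi with hh | hh
        · rcases Finset.mem_union.1 hh with hh' | hh'
          · exact Finset.mem_of_mem_filter i (hD1 hh')
          · exact h1 i (hBval i hh').1 (hBval i hh').2
        · exact Finset.mem_of_mem_filter i hh
      -- B₀ is independent
      have hind : ∀ j, pc B₀ j ≤ sg (sMain u v a b) j := by
        intro j
        have hpcU : pc B₀ j ≤ pc D j + pc blockM j + pc AV j := by
          rw [hB₀]
          calc pc (D ∪ blockM ∪ AV) j ≤ pc (D ∪ blockM) j + pc AV j := by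
                rw [pc, pc, pc, Finset.filter_union]
                exact Finset.card_union_le _ _
            _ ≤ pc D j + pc blockM j + pc AV j := by
                have : pc (D ∪ blockM) j ≤ pc D j + pc blockM j := by
                  rw [pc, pc, pc, Finset.filter_union]
                  exact Finset.card_union_le _ _
                omega
        have hpcB : pc blockM j = min j (u.length + a) - min j u.length := by
          rw [hblockM, pc, Finset.filter_filter]
          have e : (Finset.univ.filter fun i : Fin N =>
              (u.length ≤ (i:ℕ) ∧ (i:ℕ) < u.length + a) ∧ (i:ℕ) < j)
              = Finset.univ.filter fun i : Fin N =>
                u.length ≤ (i:ℕ) ∧ (i:ℕ) < min j (u.length + a) :=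
            Finset.filter_congr fun i _ => by omega
          rw [e, card_filter_interval (by omega)]
          omega
        have hpcV : pc AV j ≤ sg v (j - (u.length + a + b)) := by
          rcases le_or_gt j (u.length + a + b) with hc | hc
          · have : pc AV j = 0 := by
              rw [pc, Finset.card_eq_zero]
              refine Finset.filter_false_of_mem fun i hi => ?_
              have := hVval i hi
              omega
            omega
          · have e1 : pc AV j = wc A (u.length + a + b) (min j N) := by
              rw [hAV, pc, wc, Finset.filter_filter]
              congr 1
              refine Finset.filter_congr fun i _ => ?_
              have := i.isLt
              omega
            have e2 : wc A (u.length + a + b) (min j N)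
                = wc A (u.length + a + b) (u.length + a + b + (min j N - (u.length + a + b))) := by
              congr 1
              omega
            have e3 := h4 (min j N - (u.length + a + b))
            have e4 : sg v (min j N - (u.length + a + b)) ≤ sg v (j - (u.length + a + b)) :=
              sg_mono (by omega)
            omega
        have hsgS := sg_sMain u v a b j
        have hDj := hD3 j
        omega
      obtain ⟨B, hBsub, hBbasis⟩ := extend (sMain u v a b) hlenS B₀ hind
      have hBA : B₀ ⊆ A ∩ B := Finset.subset_inter hsubA hBsub
      calc u.count true + a + wc A (u.length + a + b) N = B₀.card := hcard.symm
        _ ≤ (A ∩ B).card := Finset.card_le_card hBA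
        _ ≤ _ := le_rkL _ A B hBbasis
    · -- u.count true ≤ (A.filter (· < u.length)).card
      have := h3 0
      rw [sg_zero] at this
      have e : (A.filter fun i : Fin N => (i:ℕ) < u.length).card = wc A 0 u.length := by
        rw [wc]
        congr 1
        exact Finset.filter_congr fun i _ => by omega
      omega
    · intro j
      have := h3 j
      have e := tc_filter_lt A u.length j
      omega
  -- swapped rank
  have hup' : rkL (sSwap u v a b) N A
      ≤ u.count true + a + wc A (u.length + a + b) N - 1 := by
    have hcrk := rkL_le_crk (sSwap u v a b) A (u.length + a)
    have he := sg_sSwap_eq u v a b ha hb (u.length + a)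
    rw [if_pos rfl] at he
    omega
  have hlow' := rk_swap_ge ha hb hN A
  omega

end CoreThree

noncomputable def fEval' (K : Type*) [Field K] (u : List Bool) : MvPolynomial (Fin 2) K :=
  MvPolynomial.aeval (fun i : Fin 2 => if i = 0 then 1 else X 1)
    (tutte K (u.count true) (freedomRk u))

lemma fEval_eq (K : Type*) [Field K] (u : List Bool) :
    fEval' K u = ∑ Au ∈ Finset.univ.filter
        (fun Au : Finset (Fin u.length) => ∀ j, u.count true ≤ sg u j + tc Au j),
      (X 1 - 1 : MvPolynomial (Fin 2) K) ^ (Au.card - u.count true) := by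
  have hT : tutte K (u.count true) (freedomRk u) = freedomTutte K u := rfl
  rw [fEval', hT, freedomTutte_eq K u (rfl : u.length = u.length), map_sum]
  have hterm : ∀ A : Finset (Fin u.length),
      (MvPolynomial.aeval (fun i : Fin 2 => if i = 0 then (1 : MvPolynomial (Fin 2) K) else X 1))
        (((X 0 : MvPolynomial (Fin 2) K) - 1) ^ (u.count true - rkL u u.length A)
          * ((X 1 : MvPolynomial (Fin 2) K) - 1) ^ (A.card - rkL u u.length A))
      = if rkL u u.length A = u.count true then (X 1 - 1) ^ (A.card - u.count true) else 0 := by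
    intro A
    rw [map_mul, map_pow, map_pow, map_sub, map_sub, aeval_X, aeval_X, map_one]
    simp only [eq_self_iff_true, if_true, if_neg (show (1 : Fin 2) ≠ 0 by decide), sub_self]
    have hle : rkL u u.length A ≤ u.count true := by
      have := rkL_le_crk u A u.length
      rw [sg_big (le_refl _), tc_big (le_refl _)] at this
      omega
    by_cases hr : rkL u u.length A = u.count true
    · rw [if_pos hr, hr, Nat.sub_self, pow_zero, one_mul]
    · rw [if_neg hr, zero_pow (by omega), zero_mul]
  rw [Finset.sum_congr rfl fun A _ => hterm A, ← Finset.sum_filter]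
  apply Finset.sum_congr
  · apply Finset.filter_congr
    intro A _
    exact rkL_eq_count_iff u rfl A
  · intro A _
    rfl

noncomputable def gEval' (K : Type*) [Field K] (v : List Bool) : MvPolynomial (Fin 2) K :=
  MvPolynomial.aeval (fun i : Fin 2 => if i = 0 then X 0 else 1)
    (tutte K (v.count true) (freedomRk v))

lemma gEval_eq (K : Type*) [Field K] (v : List Bool) :
    gEval' K v = ∑ Av ∈ Finset.univ.filter
        (fun Av : Finset (Fin v.length) => ∀ j, pc Av j ≤ sg v j),
      (X 0 - 1 : MvPolynomial (Fin 2) K) ^ (v.count true - Av.card) := by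
  have hT : tutte K (v.count true) (freedomRk v) = freedomTutte K v := rfl
  rw [gEval', hT, freedomTutte_eq K v (rfl : v.length = v.length), map_sum]
  have hterm : ∀ A : Finset (Fin v.length),
      (MvPolynomial.aeval (fun i : Fin 2 => if i = 0 then (X 0 : MvPolynomial (Fin 2) K) else 1))
        (((X 0 : MvPolynomial (Fin 2) K) - 1) ^ (v.count true - rkL v v.length A)
          * ((X 1 : MvPolynomial (Fin 2) K) - 1) ^ (A.card - rkL v v.length A))
      = if rkL v v.length A = A.card then (X 0 - 1) ^ (v.count true - A.card) else 0 := by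
    intro A
    rw [map_mul, map_pow, map_pow, map_sub, map_sub, aeval_X, aeval_X, map_one]
    simp only [eq_self_iff_true, if_true, if_neg (show (1 : Fin 2) ≠ 0 by decide), sub_self]
    have hle : rkL v v.length A ≤ A.card := rkL_le_card v A
    by_cases hr : rkL v v.length A = A.card
    · rw [if_pos hr, hr, Nat.sub_self, pow_zero, mul_one]
    · rw [if_neg hr, zero_pow (by omega), mul_zero]
  rw [Finset.sum_congr rfl fun A _ => hterm A, ← Finset.sum_filter]
  apply Finset.sum_congr
  · apply Finset.filter_congr
    intro A _
    exact rkL_eq_card_iff v rfl A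
  · intro A _
    rfl

def embW (c k : ℕ) {N : ℕ} (h : c + k ≤ N) : Fin k ↪ Fin N :=
  ⟨fun i => ⟨c + (i:ℕ), by omega⟩, fun i j hij => Fin.ext (by
    have : c + (i:ℕ) = c + (j:ℕ) := congrArg Fin.val hij
    omega)⟩

lemma embW_val (c k : ℕ) {N : ℕ} (h : c + k ≤ N) (i : Fin k) :
    ((embW c k h i : Fin N) : ℕ) = c + (i:ℕ) := rfl

lemma mem_map_embW {c k N : ℕ} (h : c + k ≤ N) (S : Finset (Fin k)) (x : Fin N) :
    x ∈ S.map (embW c k h) ↔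
      ∃ hx : c ≤ (x:ℕ) ∧ (x:ℕ) < c + k, (⟨(x:ℕ) - c, by omega⟩ : Fin k) ∈ S := by
  constructor
  · intro hm
    obtain ⟨i, hi, hfi⟩ := Finset.mem_map.1 hm
    have hv : c + (i:ℕ) = (x:ℕ) := congrArg Fin.val hfi
    have hik := i.isLt
    refine ⟨by omega, ?_⟩
    have he : (⟨(x:ℕ) - c, by omega⟩ : Fin k) = i := Fin.ext (show (x:ℕ) - c = (i:ℕ) by omega)
    rw [he]
    exact hi
  · rintro ⟨hx, hS⟩
    refine Finset.mem_map.2 ⟨⟨(x:ℕ) - c, by omega⟩, hS, Fin.ext ?_⟩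
    show c + ((x:ℕ) - c) = (x:ℕ)
    omega

lemma mem_res {c k N : ℕ} (h : c + k ≤ N) (A : Finset (Fin N)) (i : Fin k) :
    i ∈ res c k h A ↔ (⟨c + (i:ℕ), by omega⟩ : Fin N) ∈ A := by
  rw [res, Finset.mem_filter]
  exact ⟨fun h' => h'.2, fun h' => ⟨Finset.mem_univ _, h'⟩⟩

lemma wc_map_embW {c k N : ℕ} (h : c + k ≤ N) (S : Finset (Fin k)) (l m : ℕ) :
    wc (S.map (embW c k h)) l m
      = (S.filter fun i : Fin k => l ≤ c + (i:ℕ) ∧ c + (i:ℕ) < m).card := by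
  rw [wc, Finset.filter_map, Finset.card_map]
  rfl

lemma wc_union_le {N : ℕ} (X Y : Finset (Fin N)) (l m : ℕ) :
    wc (X ∪ Y) l m ≤ wc X l m + wc Y l m := by
  rw [wc, wc, wc, Finset.filter_union]
  exact Finset.card_union_le _ _

lemma wc_mono_set {N : ℕ} {X Y : Finset (Fin N)} (h : X ⊆ Y) (l m : ℕ) :
    wc X l m ≤ wc Y l m :=
  Finset.card_le_card (Finset.filter_subset_filter _ h)

lemma main_diff (K : Type*) [Field K] (u v : List Bool) (a b : ℕ) (ha : 1 ≤ a) (hb : 1 ≤ b) :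
    freedomTutte K (sMain u v a b) - freedomTutte K (sSwap u v a b)
      = fEval' K u * gEval' K v * (X 0 + X 1 - X 0 * X 1) := by
  classical
  have hsN : (sMain u v a b).length = u.length + a + b + v.length := length_sMain u v a b
  have hs'N : (sSwap u v a b).length = u.length + a + b + v.length := length_sSwap u v a b ha hb
  rw [freedomTutte_eq K (sMain u v a b) hsN, freedomTutte_eq K (sSwap u v a b) hs'N,
    fEval_eq, gEval_eq, ← Finset.sum_sub_distrib]
  rw [← Finset.sum_filter_add_sum_filter_not Finset.univ
    (fun A : Finset (Fin (u.length + a + b + v.length)) => PA u v a b A)]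
  have hzero : ∑ A ∈ Finset.univ.filter
      (fun A : Finset (Fin (u.length + a + b + v.length)) => ¬ PA u v a b A),
      ((X 0 - 1 : MvPolynomial (Fin 2) K) ^ ((sMain u v a b).count true
          - rkL (sMain u v a b) (u.length + a + b + v.length) A)
        * (X 1 - 1) ^ (A.card - rkL (sMain u v a b) (u.length + a + b + v.length) A)
      - (X 0 - 1) ^ ((sSwap u v a b).count true
          - rkL (sSwap u v a b) (u.length + a + b + v.length) A)
        * (X 1 - 1) ^ (A.card - rkL (sSwap u v a b) (u.length + a + b + v.length) A)) = 0 := by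
    refine Finset.sum_eq_zero fun A hA => ?_
    have hnp := (Finset.mem_filter.1 hA).2
    rw [rk_eq_of_not_PA ha hb rfl A hnp, count_sSwap u v a b ha, count_sMain, sub_self]
  rw [hzero, add_zero]
  rw [Finset.sum_mul_sum, Finset.sum_mul]
  have hswap : ∀ (Au : Finset (Fin u.length)),
      (∑ Av ∈ Finset.univ.filter (fun Av : Finset (Fin v.length) => ∀ j, pc Av j ≤ sg v j),
        (X 1 - 1 : MvPolynomial (Fin 2) K) ^ (Au.card - u.count true)
          * (X 0 - 1) ^ (v.count true - Av.card)) * (X 0 + X 1 - X 0 * X 1)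
      = ∑ Av ∈ Finset.univ.filter (fun Av : Finset (Fin v.length) => ∀ j, pc Av j ≤ sg v j),
        (X 1 - 1 : MvPolynomial (Fin 2) K) ^ (Au.card - u.count true)
          * (X 0 - 1) ^ (v.count true - Av.card) * (X 0 + X 1 - X 0 * X 1) := fun Au =>
    Finset.sum_mul _ _ _
  rw [Finset.sum_congr rfl fun Au _ => hswap Au]
  rw [← Finset.sum_product']
  -- now a bijection between the product set and the sets satisfying `PA`
  have h0 : 0 + u.length ≤ u.length + a + b + v.length := by omega
  have hz : (u.length + a + b) + v.length ≤ u.length + a + b + v.length := le_refl _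
  refine Finset.sum_nbij'
    (i := fun A => (res 0 u.length h0 A, res (u.length + a + b) v.length hz A))
    (j := fun P => P.1.map (embW 0 u.length h0)
      ∪ (Finset.univ.filter fun i : Fin (u.length + a + b + v.length) =>
          u.length ≤ (i:ℕ) ∧ (i:ℕ) < u.length + a)
      ∪ P.2.map (embW (u.length + a + b) v.length hz))
    ?_ ?_ ?_ ?_ ?_
  · -- forward maps into the product set
    intro A hA
    have hPA := (Finset.mem_filter.1 hA).2
    obtain ⟨h1, h2, h3, h4⟩ := hPA
    rw [Finset.mem_product]
    constructor
    · refine Finset.mem_filter.2 ⟨Finset.mem_univ _, fun j => ?_⟩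
      have e := tc_res 0 u.length h0 A j
      rw [zero_add, zero_add] at e
      rw [e]
      exact h3 j
    · refine Finset.mem_filter.2 ⟨Finset.mem_univ _, fun j => ?_⟩
      have e := pc_res (u.length + a + b) v.length hz A j
      rw [e]
      have e3 := h4 (min j v.length)
      have e4 : sg v (min j v.length) ≤ sg v j := sg_mono (by omega)
      omega
  · -- backward maps into the `PA` sets
    rintro ⟨Au, Av⟩ hP
    dsimp only
    rw [Finset.mem_product] at hP
    obtain ⟨hP1, hP2⟩ := hP
    dsimp only at hP1 hP2
    have hAu := (Finset.mem_filter.1 hP1).2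
    have hAv := (Finset.mem_filter.1 hP2).2
    refine Finset.mem_filter.2 ⟨Finset.mem_univ _, ?_, ?_, ?_, ?_⟩
    · intro i hi1 hi2
      refine Finset.mem_union.2 (Or.inl (Finset.mem_union.2 (Or.inr ?_)))
      exact Finset.mem_filter.2 ⟨Finset.mem_univ _, hi1, hi2⟩
    · intro i hi1 hi2 hc
      rcases Finset.mem_union.1 hc with hc' | hc'
      · rcases Finset.mem_union.1 hc' with hc'' | hc''
        · obtain ⟨hx, -⟩ := (mem_map_embW h0 Au i).1 hc''
          omega
        · have := (Finset.mem_filter.1 hc'').2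
          omega
      · obtain ⟨hx, -⟩ := (mem_map_embW hz Av i).1 hc'
        omega
    · intro j
      have hmono : wc (Au.map (embW 0 u.length h0)) j u.length
          ≤ wc (Au.map (embW 0 u.length h0)
              ∪ (Finset.univ.filter fun i : Fin (u.length + a + b + v.length) =>
                  u.length ≤ (i:ℕ) ∧ (i:ℕ) < u.length + a)
              ∪ Av.map (embW (u.length + a + b) v.length hz)) j u.length := by
        refine wc_mono_set ?_ _ _
        intro x hx
        exact Finset.mem_union.2 (Or.inl (Finset.mem_union.2 (Or.inl hx)))
      have he : wc (Au.map (embW 0 u.length h0)) j u.length = tc Au j := by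
        rw [wc_map_embW, tc]
        congr 1
        refine Finset.filter_congr fun i _ => ?_
        have := i.isLt
        constructor
        · intro h'; omega
        · intro h'; omega
      have := hAu j
      omega
    · intro j
      have hle := wc_union_le (Au.map (embW 0 u.length h0)
          ∪ (Finset.univ.filter fun i : Fin (u.length + a + b + v.length) =>
              u.length ≤ (i:ℕ) ∧ (i:ℕ) < u.length + a))
        (Av.map (embW (u.length + a + b) v.length hz))
        (u.length + a + b) (u.length + a + b + j)
      have hle2 := wc_union_le (Au.map (embW 0 u.length h0))
        (Finset.univ.filter fun i : Fin (u.length + a + b + v.length) =>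
            u.length ≤ (i:ℕ) ∧ (i:ℕ) < u.length + a)
        (u.length + a + b) (u.length + a + b + j)
      have hz1 : wc (Au.map (embW 0 u.length h0)) (u.length + a + b) (u.length + a + b + j) = 0 := by
        refine wc_none fun x hx1 hx2 hc => ?_
        obtain ⟨hx, -⟩ := (mem_map_embW h0 Au x).1 hc
        omega
      have hz2 : wc (Finset.univ.filter fun i : Fin (u.length + a + b + v.length) =>
          u.length ≤ (i:ℕ) ∧ (i:ℕ) < u.length + a) (u.length + a + b) (u.length + a + b + j) = 0 := by
        refine wc_none fun x hx1 hx2 hc => ?_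
        have := (Finset.mem_filter.1 hc).2
        omega
      have hv : wc (Av.map (embW (u.length + a + b) v.length hz))
          (u.length + a + b) (u.length + a + b + j) = pc Av j := by
        rw [wc_map_embW, pc]
        congr 1
        refine Finset.filter_congr fun i _ => ?_
        constructor
        · intro h'; omega
        · intro h'; omega
      have := hAv j
      omega
  · -- left inverse
    intro A hA
    dsimp only
    have hPA := (Finset.mem_filter.1 hA).2
    obtain ⟨h1, h2, h3, h4⟩ := hPA
    ext x
    simp only [Finset.mem_union]
    constructor
    · intro hx
      rcases hx with hx' | hx'
      · rcases hx' with hx'' | hx''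
        · obtain ⟨hb1, hb2⟩ := (mem_map_embW h0 _ x).1 hx''
          rw [mem_res] at hb2
          have he : (⟨0 + ((x:ℕ) - 0), by omega⟩ : Fin (u.length + a + b + v.length)) = x :=
            Fin.ext (show 0 + ((x:ℕ) - 0) = (x:ℕ) by omega)
          rwa [he] at hb2
        · have hx3 := (Finset.mem_filter.1 hx'').2
          exact h1 x hx3.1 hx3.2
      · obtain ⟨hb1, hb2⟩ := (mem_map_embW hz _ x).1 hx'
        rw [mem_res] at hb2
        have he : (⟨(u.length + a + b) + ((x:ℕ) - (u.length + a + b)), by omega⟩ :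
            Fin (u.length + a + b + v.length)) = x :=
          Fin.ext (show (u.length + a + b) + ((x:ℕ) - (u.length + a + b)) = (x:ℕ) by omega)
        rwa [he] at hb2
    · intro hxA
      have hxlt := x.isLt
      rcases lt_or_ge (x:ℕ) u.length with hr | hr
      · refine Or.inl (Or.inl ((mem_map_embW h0 _ x).2 ⟨by omega, ?_⟩))
        rw [mem_res]
        have he : (⟨0 + ((x:ℕ) - 0), by omega⟩ : Fin (u.length + a + b + v.length)) = x :=
          Fin.ext (show 0 + ((x:ℕ) - 0) = (x:ℕ) by omega)
        rwa [he]
      rcases lt_or_ge (x:ℕ) (u.length + a) with hr2 | hr2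
      · exact Or.inl (Or.inr (Finset.mem_filter.2 ⟨Finset.mem_univ _, hr, hr2⟩))
      rcases lt_or_ge (x:ℕ) (u.length + a + b) with hr3 | hr3
      · exact absurd hxA (h2 x hr2 hr3)
      · refine Or.inr ((mem_map_embW hz _ x).2 ⟨by omega, ?_⟩)
        rw [mem_res]
        have he : (⟨(u.length + a + b) + ((x:ℕ) - (u.length + a + b)), by omega⟩ :
            Fin (u.length + a + b + v.length)) = x :=
          Fin.ext (show (u.length + a + b) + ((x:ℕ) - (u.length + a + b)) = (x:ℕ) by omega)
        rwa [he]
  · -- right inverse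
    rintro ⟨Au, Av⟩ hP
    dsimp only
    have hres1 : res 0 u.length h0
        (Au.map (embW 0 u.length h0)
          ∪ (Finset.univ.filter fun i : Fin (u.length + a + b + v.length) =>
              u.length ≤ (i:ℕ) ∧ (i:ℕ) < u.length + a)
          ∪ Av.map (embW (u.length + a + b) v.length hz)) = Au := by
      ext i
      rw [mem_res]
      simp only [Finset.mem_union]
      constructor
      · intro hx
        rcases hx with hx' | hx'
        · rcases hx' with hx'' | hx''
          · obtain ⟨hb1, hb2⟩ := (mem_map_embW h0 _ _).1 hx''
            have hb2' : (⟨0 + (i:ℕ) - 0, by omega⟩ : Fin u.length) ∈ Au := hb2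
            have he : (⟨0 + (i:ℕ) - 0, by omega⟩ : Fin u.length) = i :=
              Fin.ext (show 0 + (i:ℕ) - 0 = (i:ℕ) by omega)
            rwa [he] at hb2'
          · have hx3 : u.length ≤ 0 + (i:ℕ) ∧ 0 + (i:ℕ) < u.length + a :=
              (Finset.mem_filter.1 hx'').2
            have := i.isLt
            omega
        · obtain ⟨hb1, -⟩ := (mem_map_embW hz _ _).1 hx'
          have hb1' : u.length + a + b ≤ 0 + (i:ℕ)
              ∧ 0 + (i:ℕ) < u.length + a + b + v.length := hb1
          have := i.isLt
          omega
      · intro hi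
        refine Or.inl (Or.inl ((mem_map_embW h0 _ _).2 ⟨?_, ?_⟩))
        · show 0 ≤ 0 + (i:ℕ) ∧ 0 + (i:ℕ) < 0 + u.length
          have := i.isLt
          omega
        · show (⟨0 + (i:ℕ) - 0, by omega⟩ : Fin u.length) ∈ Au
          have he : (⟨0 + (i:ℕ) - 0, by omega⟩ : Fin u.length) = i :=
            Fin.ext (show 0 + (i:ℕ) - 0 = (i:ℕ) by omega)
          rwa [he]
    have hres2 : res (u.length + a + b) v.length hz
        (Au.map (embW 0 u.length h0)
          ∪ (Finset.univ.filter fun i : Fin (u.length + a + b + v.length) =>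
              u.length ≤ (i:ℕ) ∧ (i:ℕ) < u.length + a)
          ∪ Av.map (embW (u.length + a + b) v.length hz)) = Av := by
      ext i
      rw [mem_res]
      simp only [Finset.mem_union]
      constructor
      · intro hx
        rcases hx with hx' | hx'
        · rcases hx' with hx'' | hx''
          · obtain ⟨hb1, -⟩ := (mem_map_embW h0 _ _).1 hx''
            have hb1' : 0 ≤ (u.length + a + b) + (i:ℕ)
                ∧ (u.length + a + b) + (i:ℕ) < 0 + u.length := hb1
            omega
          · have hx3 : u.length ≤ (u.length + a + b) + (i:ℕ)
                ∧ (u.length + a + b) + (i:ℕ) < u.length + a := (Finset.mem_filter.1 hx'').2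
            omega
        · obtain ⟨hb1, hb2⟩ := (mem_map_embW hz _ _).1 hx'
          have hb2' : (⟨(u.length + a + b) + (i:ℕ) - (u.length + a + b), by omega⟩ :
              Fin v.length) ∈ Av := hb2
          have he : (⟨(u.length + a + b) + (i:ℕ) - (u.length + a + b), by omega⟩ :
              Fin v.length) = i :=
            Fin.ext (show (u.length + a + b) + (i:ℕ) - (u.length + a + b) = (i:ℕ) by omega)
          rwa [he] at hb2'
      · intro hi
        refine Or.inr ((mem_map_embW hz _ _).2 ⟨?_, ?_⟩)
        · show u.length + a + b ≤ (u.length + a + b) + (i:ℕ)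
            ∧ (u.length + a + b) + (i:ℕ) < (u.length + a + b) + v.length
          have := i.isLt
          omega
        · show (⟨(u.length + a + b) + (i:ℕ) - (u.length + a + b), by omega⟩ : Fin v.length) ∈ Av
          have he : (⟨(u.length + a + b) + (i:ℕ) - (u.length + a + b), by omega⟩ :
              Fin v.length) = i :=
            Fin.ext (show (u.length + a + b) + (i:ℕ) - (u.length + a + b) = (i:ℕ) by omega)
          rwa [he]
    exact Prod.ext hres1 hres2
  · -- the terms agree
    intro A hA
    dsimp only
    have hPA := (Finset.mem_filter.1 hA).2
    obtain ⟨hrk1, hrk2⟩ := rk_of_PA ha hb rfl A hPA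
    obtain ⟨h1, h2, h3, h4⟩ := hPA
    have hru : u.count true ≤ wc A 0 u.length := by
      have := h3 0
      rwa [sg_zero, Nat.zero_add] at this
    have hwv : wc A (u.length + a + b) (u.length + a + b + v.length) ≤ v.count true := by
      have := h4 v.length
      rwa [sg_big (le_refl _)] at this
    have hone : 1 ≤ u.count true + a
        + wc A (u.length + a + b) (u.length + a + b + v.length) := by omega
    have hcard : A.card = wc A 0 u.length + a
        + wc A (u.length + a + b) (u.length + a + b + v.length) := by
      have e0 : A.card = tc A 0 := (tc_zero A).symm
      have e1 : tc A 0 = wc A 0 u.length + tc A u.length :=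
        tc_split_wc A (by omega) (by omega)
      have e2 : tc A u.length = wc A u.length (u.length + a) + tc A (u.length + a) :=
        tc_split_wc A (by omega) (by omega)
      have e3 : tc A (u.length + a)
          = wc A (u.length + a) (u.length + a + b) + tc A (u.length + a + b) :=
        tc_split_wc A (by omega) (by omega)
      have e4 : wc A u.length (u.length + a) = a := by
        have := wc_full (A := A) (l := u.length) (m := u.length + a) (by omega) h1
        omega
      have e5 : wc A (u.length + a) (u.length + a + b) = 0 := wc_none h2
      have e6 : tc A (u.length + a + b)
          = wc A (u.length + a + b) (u.length + a + b + v.length) := tc_eq_wc A _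
      omega
    have hcres1 : (res 0 u.length h0 A).card = wc A 0 u.length := by
      rw [card_res, zero_add]
    have hcres2 : (res (u.length + a + b) v.length hz A).card
        = wc A (u.length + a + b) (u.length + a + b + v.length) := card_res _ _ _ _
    rw [count_sMain, count_sSwap u v a b ha, hrk1, hrk2, hcres1, hcres2, hcard]
    have e1 : u.count true + a + v.count true
        - (u.count true + a + wc A (u.length + a + b) (u.length + a + b + v.length))
        = v.count true - wc A (u.length + a + b) (u.length + a + b + v.length) := by omega
    have e2 : wc A 0 u.length + a + wc A (u.length + a + b) (u.length + a + b + v.length)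
        - (u.count true + a + wc A (u.length + a + b) (u.length + a + b + v.length))
        = wc A 0 u.length - u.count true := by omega
    have e3 : u.count true + a + v.count true
        - (u.count true + a + wc A (u.length + a + b) (u.length + a + b + v.length) - 1)
        = v.count true - wc A (u.length + a + b) (u.length + a + b + v.length) + 1 := by omega
    have e4 : wc A 0 u.length + a + wc A (u.length + a + b) (u.length + a + b + v.length)
        - (u.count true + a + wc A (u.length + a + b) (u.length + a + b + v.length) - 1)
        = wc A 0 u.length - u.count true + 1 := by omega
    rw [e1, e2, e3, e4, pow_succ, pow_succ]
    ring

end FT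

/-- For `a, b ≥ 1` and bit sequences `u, v` with `u 1^a 0^b v` an
`(n,r)`-sequence, `T(F(u 1^a 0^b v)) − T(F(u 1^{a−1} 0 1 0^{b−1} v)) = f(u)·g(v)·(x+y−xy)`. -/
theorem freedomTutte_paving (K : Type*) [Field K] (n r a b : ℕ) (ha : 1 ≤ a) (hb : 1 ≤ b)
    (u v : List Bool)
    (hn : (u ++ List.replicate a true ++ List.replicate b false ++ v).length = n)
    (hr : (u ++ List.replicate a true ++ List.replicate b false ++ v).count true = r) :
    freedomTutte K (u ++ List.replicate a true ++ List.replicate b false ++ v)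
      - freedomTutte K (u ++ List.replicate (a - 1) true ++ [false, true] ++
          List.replicate (b - 1) false ++ v)
    = fEval K u * gEval K v * (X 0 + X 1 - X 0 * X 1) := by
  have h1 : fEval K u = FT.fEval' K u := rfl
  have h2 : gEval K v = FT.gEval' K v := rfl
  have h3 : (u ++ List.replicate a true ++ List.replicate b false ++ v) = FT.sMain u v a b := rfl
  have h4 : (u ++ List.replicate (a - 1) true ++ [false, true] ++
      List.replicate (b - 1) false ++ v) = FT.sSwap u v a b := rfl
  rw [h1, h2, h3, h4]
  exact FT.main_diff K u v a b ha hb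
end

section
/- Let M be a matroid on a ground set of n ≥ 1 elements and let m be an integer with 0 ≤ m < n. Then the coefficients t_{ij}(M) of the Tutte polynomial of M satisfy the linear relation Σ_{α=0}^{m} Σ_{β=0}^{α} (−1)^β · binomial(α,β) · t_{m−α,β}(M) = 0. -/
open MvPolynomial
open scoped Classical

/-! For every polynomial `P`, the `m`-th Brylawski sum of `P` is the coefficient of `z ^ m` in
`(1 - z)⁻¹ P(z, -z / (1 - z))`, as one checks on monomials. Under this substitution
`x - 1 ↦ -(1 - z)` and `y - 1 ↦ -(1 - z)⁻¹`, so the subset `A` contributes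
`(-1) ^ (r + |A|) (1 - z) ^ (r - |A|)` to `T(M)`, and the binomial theorem collapses the sum over
`A` to `(-1) ^ r (1 - z) ^ (r - n) (-z) ^ n`, whose coefficients below `z ^ n` vanish. -/

open Finset
open scoped PowerSeries

noncomputable def brylawskiSum (K : Type*) [CommRing K] (m : ℕ) (P : MvPolynomial (Fin 2) K) :
    K :=
  ∑ a ∈ range (m + 1), ∑ b ∈ range (a + 1),
    (-1 : K) ^ b * (a.choose b : K) *
      MvPolynomial.coeff (Finsupp.single 0 (m - a) + Finsupp.single 1 b) P

lemma brylawskiSum_monomial (K : Type*) [CommRing K] (m : ℕ) (d : Fin 2 →₀ ℕ) (c : K) :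
    brylawskiSum K m (MvPolynomial.monomial d c) =
      if d 0 ≤ m then (-1) ^ d 1 * ((m - d 0).choose (d 1) : K) * c else 0 := by
  have hsingle : ∀ a b, Finsupp.single 0 a + Finsupp.single 1 b = d ↔ a = d 0 ∧ b = d 1 := by
    intro a b
    simp only [Finsupp.ext_iff, Fin.forall_fin_two, Finsupp.add_apply, Finsupp.single_apply]
    simp [eq_comm]
  have hcond : ∀ a ∈ range (m + 1), m - a = d 0 ↔ d 0 ≤ m ∧ a = m - d 0 := by
    intro a ha; rw [mem_range] at ha; omega
  have hterm : ∀ a, (if d 1 < a + 1 then (-1) ^ d 1 * (a.choose (d 1) : K) * c else 0) =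
      (-1) ^ d 1 * (a.choose (d 1) : K) * c := by
    intro a
    split_ifs with h
    · rfl
    · rw [Nat.choose_eq_zero_of_lt (by omega), Nat.cast_zero, mul_zero, zero_mul]
  simp only [brylawskiSum, MvPolynomial.coeff_monomial, eq_comm (a := d), hsingle, ite_and,
    mul_ite, mul_zero, sum_ite_irrel, sum_const_zero, sum_ite_eq', mem_range]
  rw [sum_congr rfl fun a ha => by rw [hterm, if_congr (hcond a ha) rfl rfl]]
  simp only [ite_and, sum_ite_irrel, sum_ite_eq', mem_range, sum_const_zero]
  split_ifs <;> first | rfl | omega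

lemma PowerSeries.coeff_X_pow_add_mul_mk_one_pow (K : Type*) [CommRing K] (m i j : ℕ) :
    PowerSeries.coeff m (PowerSeries.X ^ (i + j) * PowerSeries.mk 1 ^ (j + 1) : K⟦X⟧) =
      if i ≤ m then ((m - i).choose j : K) else 0 := by
  rw [PowerSeries.coeff_X_pow_mul', PowerSeries.mk_one_pow_eq_mk_choose_add, PowerSeries.coeff_mk]
  split_ifs with h₁ h₂ h₂
  · congr 2; omega
  · omega
  · rw [Nat.choose_eq_zero_of_lt (by omega), Nat.cast_zero]
  · rfl

lemma PowerSeries.one_sub_mk_one (K : Type*) [CommRing K] :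
    1 - PowerSeries.mk 1 = -(PowerSeries.X * PowerSeries.mk 1 : K⟦X⟧) := by
  linear_combination -PowerSeries.mk_one_mul_one_sub_eq_one K

/-- `(x, y) ↦ (z, -z / (1 - z))`, where `PowerSeries.mk 1 = (1 - z)⁻¹`. -/
noncomputable def brylawskiSubst (K : Type*) [CommRing K] :
    MvPolynomial (Fin 2) K →ₐ[K] K⟦X⟧ :=
  MvPolynomial.aeval ![PowerSeries.X, 1 - PowerSeries.mk 1]

lemma mk_one_mul_brylawskiSubst_monomial (K : Type*) [CommRing K] (d : Fin 2 →₀ ℕ) (c : K) :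
    PowerSeries.mk 1 * brylawskiSubst K (MvPolynomial.monomial d c) =
      PowerSeries.C ((-1) ^ d 1 * c) *
        (PowerSeries.X ^ (d 0 + d 1) * PowerSeries.mk 1 ^ (d 1 + 1)) := by
  rw [brylawskiSubst, MvPolynomial.aeval_monomial, Finsupp.prod_fintype _ _ (by simp),
    Fin.prod_univ_two]
  simp only [Matrix.cons_val_zero, Matrix.cons_val_one, PowerSeries.one_sub_mk_one]
  rw [neg_pow, mul_pow, PowerSeries.algebraMap_eq, map_mul, map_pow, map_neg,
    map_one (PowerSeries.C (R := K))]
  ring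

theorem brylawskiSum_eq_coeff_brylawskiSubst (K : Type*) [CommRing K] (m : ℕ)
    (P : MvPolynomial (Fin 2) K) :
    brylawskiSum K m P = PowerSeries.coeff m (PowerSeries.mk 1 * brylawskiSubst K P) := by
  induction P using MvPolynomial.induction_on' with
  | monomial d c =>
    rw [mk_one_mul_brylawskiSubst_monomial, PowerSeries.coeff_C_mul,
      PowerSeries.coeff_X_pow_add_mul_mk_one_pow, brylawskiSum_monomial]
    split_ifs <;> ring
  | add p q hp hq =>
    simp only [brylawskiSum, map_add, mul_add, MvPolynomial.coeff_add, sum_add_distrib] at hp hq ⊢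
    rw [hp, hq]

lemma neg_pow_sub_mul_neg_pow_sub_mul_pow {R : Type*} [CommRing R] {g w : R} (hgw : g * w = 1)
    {k r a n : ℕ} (hkr : k ≤ r) (hka : k ≤ a) (han : a ≤ n) :
    (-w) ^ (r - k) * (-g) ^ (a - k) * w ^ n = (-1) ^ (r + a) * w ^ (r + (n - a)) := by
  obtain ⟨p, rfl⟩ := Nat.exists_eq_add_of_le hkr
  obtain ⟨q, rfl⟩ := Nat.exists_eq_add_of_le hka
  obtain ⟨s, rfl⟩ := Nat.exists_eq_add_of_le han
  rw [Nat.add_sub_cancel_left, Nat.add_sub_cancel_left, Nat.add_sub_cancel_left, neg_pow w,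
    neg_pow g, show k + p + (k + q) = p + q + 2 * k by ring, pow_add _ (p + q), pow_mul,
    neg_one_sq, one_pow, mul_one]
  calc (-1) ^ p * w ^ p * ((-1) ^ q * g ^ q) * w ^ (k + q + s)
      = (-1) ^ (p + q) * w ^ (k + p + s) * (g * w) ^ q := by ring
    _ = _ := by rw [hgw, one_pow, mul_one]

theorem X_pow_dvd_brylawskiSubst_tutte (K : Type*) [Field K] {n r : ℕ}
    (rk : Finset (Fin n) → ℕ) (hr : ∀ A, rk A ≤ r) (hcard : ∀ A, rk A ≤ #A) :
    PowerSeries.X ^ n ∣ brylawskiSubst K (tutte K r rk) := by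
  set w : K⟦X⟧ := 1 - PowerSeries.X
  have hgw : PowerSeries.mk 1 * w = 1 := PowerSeries.mk_one_mul_one_sub_eq_one K
  have hsubst : brylawskiSubst K (tutte K r rk) =
      ∑ A, (-w) ^ (r - rk A) * (-PowerSeries.mk 1) ^ (#A - rk A) := by
    simp only [tutte, brylawskiSubst, map_sum, map_mul, map_pow, map_sub, map_one,
      MvPolynomial.aeval_X, Matrix.cons_val_zero, Matrix.cons_val_one, w]
    congr! 3 <;> ring
  have hmul : brylawskiSubst K (tutte K r rk) * w ^ n =
      (-1) ^ r * w ^ r * (-PowerSeries.X) ^ n := by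
    rw [hsubst, sum_mul, sum_congr rfl fun A _ =>
      neg_pow_sub_mul_neg_pow_sub_mul_pow hgw (hr A) (hcard A) (by simpa using A.card_le_univ)]
    calc ∑ A : Finset (Fin n), (-1) ^ (r + #A) * w ^ (r + (n - #A))
        = (-1) ^ r * w ^ r * ∑ A : Finset (Fin n), (-1) ^ #A * w ^ (n - #A) := by
          rw [mul_sum]; exact sum_congr rfl fun A _ => by ring
      _ = (-1) ^ r * w ^ r * (-PowerSeries.X) ^ n := by
          rw [Fin.sum_pow_mul_eq_add_pow]; simp only [w]; ring
  rw [← ((IsUnit.of_mul_eq_one_right _ hgw).pow n).dvd_mul_right, hmul]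
  exact Dvd.intro_left ((-1) ^ r * w ^ r * (-1) ^ n) (by ring)

theorem brylawskiSum_tutte_eq_zero (K : Type*) [Field K] {n r m : ℕ}
    (rk : Finset (Fin n) → ℕ) (hr : ∀ A, rk A ≤ r) (hcard : ∀ A, rk A ≤ #A) (hm : m < n) :
    brylawskiSum K m (tutte K r rk) = 0 := by
  rw [brylawskiSum_eq_coeff_brylawskiSubst]
  exact PowerSeries.X_pow_dvd_iff.mp ((X_pow_dvd_brylawskiSubst_tutte K rk hr hcard).mul_left _) m hm

lemma mrank_mono {n : ℕ} (M : Matroid (Fin n)) {S T : Set (Fin n)} (hST : S ⊆ T) :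
    mrank M S ≤ mrank M T :=
  Finset.sup_mono fun I hI => by
    simp only [mem_filter] at hI ⊢
    exact ⟨hI.1, hI.2.1, hI.2.2.trans hST⟩

lemma mrank_coe_le_card {n : ℕ} (M : Matroid (Fin n)) (A : Finset (Fin n)) :
    mrank M ↑A ≤ #A :=
  Finset.sup_le fun _ hI => card_le_card (by exact_mod_cast (mem_filter.mp hI).2.2)

theorem brylawski_relation_general (K : Type*) [Field K] (n : ℕ)
    (M : Matroid (Fin n)) (m : ℕ) (hm : m < n) :
    ∑ a ∈ Finset.range (m + 1), ∑ b ∈ Finset.range (a + 1),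
      (-1 : K) ^ b * (a.choose b : K) *
        MvPolynomial.coeff (Finsupp.single (0 : Fin 2) (m - a) + Finsupp.single 1 b)
          (tutte K (mrank M Set.univ) (fun A : Finset (Fin n) => mrank M ↑A)) = 0 :=
  brylawskiSum_tutte_eq_zero K _ (fun _ => mrank_mono M (Set.subset_univ _))
    (mrank_coe_le_card M) hm

/-- (Brylawski's relations.)  For a matroid `M` on `n ≥ 1` elements and
`0 ≤ m < n`, the coefficients `t_{ij}` of the Tutte polynomial of `M` satisfy
`Σ_{α=0}^{m} Σ_{β=0}^{α} (−1)^β C(α,β) t_{m−α,β} = 0`. -/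
theorem brylawski_relation (K : Type*) [Field K] (n : ℕ) (hn : 1 ≤ n)
    (M : Matroid (Fin n)) (hE : M.E = Set.univ) (m : ℕ) (hm : m < n) :
    ∑ a ∈ Finset.range (m + 1), ∑ b ∈ Finset.range (a + 1),
      (-1 : K) ^ b * (a.choose b : K) *
        MvPolynomial.coeff (Finsupp.single (0 : Fin 2) (m - a) + Finsupp.single 1 b)
          (tutte K (mrank M Set.univ) (fun A : Finset (Fin n) => mrank M ↑A)) = 0 :=
  brylawski_relation_general K n M m hm
end
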